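/- arXiv:1204.3284 — 8 statements merged into one kernel-verified Lean document; each statement's English description precedes it below -/
import Mathlib

section
/- (Proposition 2.1(i)) Assume Hypotheses A1 and A2 hold for the constant R > 0. Fix ξ ≥ 1 and t₀ ≥ 0, and let Q_R, P_R, d_R be any data having the properties stated in A1–A2 for this ξ and this initial time t₀. Then there exist d̄_R ∈ C⁰([t₀,∞);ℝ) and φ_R ∈ C¹([t₀,∞);(0,∞)) such that: (a) d̄_R(t) < d_R(t) for all t ≥ t₀; (b) d̄_R(t) ≥ c₁ for all t ≥ t₀+1 and ∫_{t₁}^{t₂} d̄_R(s)ds > −2c₂ for all t₂ ≥ t₁ ≥ t₀; and (c) eᵀP_R(t)A(t,q,x,e,y)e + (1/2)eᵀP_R′(t)e ≤ φ_R(t)|H(t)e|² − d̄_R(t)·eᵀP_R(t)e for all t ≥ t₀, q ∈ Q_R(t), x ∈ ℝⁿ with |x| ≤ β(t,R), e ∈ ℝⁿ with |e| ≤ ξ and eᵀP_R(t)e ≥ g(t), and y ∈ Y_R(t). -/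
set_option maxHeartbeats 8000000


open Matrix Filter

/-- Euclidean norm on `Fin k → ℝ`. -/
noncomputable def eunorm {k : ℕ} (x : Fin k → ℝ) : ℝ := Real.sqrt (∑ i, (x i) ^ 2)

/-- A set-valued map `Q` from (a subset `S` of) a space `X` to subsets of a space `Y` satisfies
the *Compactness Property* if whenever `xs ν → x` within `S` and `qs ν ∈ Q (xs ν)`, some
subsequence of `(qs ν)` converges to a point of `Q x`. -/
def SetCP {X Y : Type*} [TopologicalSpace X] [TopologicalSpace Y]
    (S : Set X) (Q : X → Set Y) : Prop :=
  ∀ (xs : ℕ → X) (qs : ℕ → Y) (x : X), (∀ ν, xs ν ∈ S) → x ∈ S →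
    Tendsto xs atTop (nhds x) → (∀ ν, qs ν ∈ Q (xs ν)) →
    ∃ φ : ℕ → ℕ, StrictMono φ ∧ ∃ q ∈ Q x, Tendsto (qs ∘ φ) atTop (nhds q)

/-- The set of output values at time `t`:
`Y_R(t) = {H(t)x(t,t₀,x₀) : t₀ ∈ [0,t], x₀ ∈ B_R}`. -/
def YR {n nout : ℕ} (H : ℝ → Matrix (Fin nout) (Fin n) ℝ)
    (sol : ℝ → (Fin n → ℝ) → ℝ → Fin n → ℝ) (R t : ℝ) : Set (Fin nout → ℝ) :=
  {y | ∃ t₀ : ℝ, ∃ x₀ : Fin n → ℝ,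
    0 ≤ t₀ ∧ t₀ ≤ t ∧ eunorm x₀ ≤ R ∧ y = (H t).mulVec (sol t₀ x₀ t)}

lemma eunorm_nonneg {k : ℕ} (x : Fin k → ℝ) : 0 ≤ eunorm x := Real.sqrt_nonneg _

lemma eunorm_sq {k : ℕ} (x : Fin k → ℝ) : eunorm x ^ 2 = ∑ i, (x i)^2 :=
  Real.sq_sqrt (Finset.sum_nonneg fun _ _ => sq_nonneg _)

lemma continuous_eunorm {k : ℕ} : Continuous (eunorm (k := k)) :=
  Real.continuous_sqrt.comp (continuous_finset_sum _ fun i _ => (continuous_apply i).pow 2)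

lemma eunorm_eq_zero {k : ℕ} {x : Fin k → ℝ} (h : eunorm x = 0) : x = 0 := by
  have hs : ∑ i, (x i)^2 = 0 := by
    have := congrArg (· ^ 2) h
    simpa [eunorm_sq] using this
  funext i
  have := (Finset.sum_eq_zero_iff_of_nonneg (fun i _ => sq_nonneg (x i))).1 hs i (Finset.mem_univ i)
  have := pow_eq_zero_iff (n := 2) (by norm_num) |>.1 this
  simpa using this

lemma abs_le_eunorm {k : ℕ} (x : Fin k → ℝ) (i : Fin k) : |x i| ≤ eunorm x := by
  have h : (x i)^2 ≤ ∑ j, (x j)^2 :=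
    Finset.single_le_sum (f := fun j => (x j)^2) (fun j _ => sq_nonneg _) (Finset.mem_univ i)
  calc |x i| = Real.sqrt ((x i)^2) := (Real.sqrt_sq_eq_abs _).symm
    _ ≤ _ := Real.sqrt_le_sqrt h

lemma norm_le_eunorm {k : ℕ} (x : Fin k → ℝ) : ‖x‖ ≤ eunorm x := by
  rw [pi_norm_le_iff_of_nonneg (eunorm_nonneg x)]
  intro i; rw [Real.norm_eq_abs]; exact abs_le_eunorm x i

lemma tendsto_mulVec_apply {m k : ℕ} {Mν : ℕ → Matrix (Fin m) (Fin k) ℝ} {vν : ℕ → Fin k → ℝ}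
    {M : Matrix (Fin m) (Fin k) ℝ} {v : Fin k → ℝ}
    (hM : ∀ i j, Tendsto (fun ν => Mν ν i j) atTop (nhds (M i j)))
    (hv : ∀ j, Tendsto (fun ν => vν ν j) atTop (nhds (v j))) (i : Fin m) :
    Tendsto (fun ν => (Mν ν).mulVec (vν ν) i) atTop (nhds (M.mulVec v i)) := by
  simp only [Matrix.mulVec, dotProduct]
  exact tendsto_finset_sum _ fun j _ => (hM i j).mul (hv j)

lemma tendsto_dotProduct {k : ℕ} {uν vν : ℕ → Fin k → ℝ} {u v : Fin k → ℝ}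
    (hu : ∀ j, Tendsto (fun ν => uν ν j) atTop (nhds (u j)))
    (hv : ∀ j, Tendsto (fun ν => vν ν j) atTop (nhds (v j))) :
    Tendsto (fun ν => uν ν ⬝ᵥ vν ν) atTop (nhds (u ⬝ᵥ v)) := by
  simp only [dotProduct]
  exact tendsto_finset_sum _ fun j _ => (hu j).mul (hv j)
/-- **Proposition 2.1(i).** Under Hypotheses A1 and A2 for the constant `R > 0`,
given `ξ ≥ 1`, `t₀ ≥ 0` and any data `Q_R`, `P_R`, `d_R` as in A1–A2, there exist
`d̄_R ∈ C⁰([t₀,∞);ℝ)` and `φ_R ∈ C¹([t₀,∞);(0,∞))` satisfying (18a), (18b) and (18c). -/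
theorem stmt2
    (n nout ℓ : ℕ)
    (H : ℝ → Matrix (Fin nout) (Fin n) ℝ)
    (hH : ∀ i j, ContinuousOn (fun t => H t i j) (Set.Ici 0))
    (F : ℝ → (Fin n → ℝ) → (Fin nout → ℝ) → Fin n → ℝ)
    (hFcont : ContinuousOn (fun p : ℝ × (Fin n → ℝ) × (Fin nout → ℝ) => F p.1 p.2.1 p.2.2)
        (Set.Ici 0 ×ˢ Set.univ))
    (hFlip : ∀ t, 0 ≤ t →
        LocallyLipschitz (fun p : (Fin n → ℝ) × (Fin nout → ℝ) => F t p.1 p.2))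
    (β : ℝ → ℝ → ℝ)
    (hβcont : Continuous fun p : ℝ × ℝ => β p.1 p.2)
    (hβmono : ∀ t₁ t₂ s₁ s₂ : ℝ, t₁ ≤ t₂ → s₁ ≤ s₂ → β t₁ s₁ ≤ β t₂ s₂)
    (hβ0 : ∀ t s, 0 ≤ β t s)
    (sol : ℝ → (Fin n → ℝ) → ℝ → Fin n → ℝ)
    (hsol0 : ∀ t₀, 0 ≤ t₀ → ∀ x₀, sol t₀ x₀ t₀ = x₀)
    (hsolode : ∀ t₀, 0 ≤ t₀ → ∀ x₀, ∀ t, t₀ ≤ t →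
        HasDerivWithinAt (sol t₀ x₀)
          (F t (sol t₀ x₀ t) ((H t).mulVec (sol t₀ x₀ t))) (Set.Ici t₀) t)
    (hsolbd : ∀ t₀, 0 ≤ t₀ → ∀ x₀, ∀ t, t₀ ≤ t → eunorm (sol t₀ x₀ t) ≤ β t (eunorm x₀))
    (A : ℝ → (Fin ℓ → ℝ) → (Fin n → ℝ) → (Fin n → ℝ) → (Fin nout → ℝ) →
      Matrix (Fin n) (Fin n) ℝ)
    (hAcont : ContinuousOn
      (fun p : ℝ × (Fin ℓ → ℝ) × (Fin n → ℝ) × (Fin n → ℝ) × (Fin nout → ℝ) =>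
        A p.1 p.2.1 p.2.2.1 p.2.2.2.1 p.2.2.2.2) (Set.Ici 0 ×ˢ Set.univ))
    (L c₁ c₂ R : ℝ) (hL : 1 < L) (hc₁ : 1 / 2 ≤ c₁) (hc₂ : 0 < c₂) (hR : 0 < R)
    (g g' : ℝ → ℝ)
    (hg'c : ContinuousOn g' (Set.Ici 0))
    (hgd : ∀ t, 0 ≤ t → HasDerivWithinAt g (g' t) (Set.Ici 0) t)
    (hg01 : ∀ t, 0 ≤ t → 0 < g t ∧ g t < 1)
    (hg'low : ∀ t, 0 ≤ t → -g t ≤ g' t)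
    (hglim : Tendsto g atTop (nhds 0))
    (ξ t₀ : ℝ) (hξ : 1 ≤ ξ) (ht₀ : 0 ≤ t₀)
    (Q : ℝ → Set (Fin ℓ → ℝ))
    (hQne : ∀ t, 0 ≤ t → (Q t).Nonempty)
    (hQcp : SetCP (Set.Ici 0) Q)
    (hA1 : ∀ t, 0 ≤ t → ∀ y ∈ YR H sol R t, ∀ x z : Fin n → ℝ,
        eunorm x ≤ β t R → eunorm (x - z) ≤ ξ →
        ∃ q ∈ Q t, F t x y - F t z y = (A t q x (x - z) y).mulVec (x - z))
    (P P' : ℝ → Matrix (Fin n) (Fin n) ℝ)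
    (hPsymm : ∀ t, t₀ ≤ t → (P t).IsSymm)
    (hP'c : ∀ i j, ContinuousOn (fun t => P' t i j) (Set.Ici t₀))
    (hPd : ∀ t, t₀ ≤ t → ∀ i j,
        HasDerivWithinAt (fun s => P s i j) (P' t i j) (Set.Ici t₀) t)
    (hPlow : ∀ t, t₀ ≤ t → ∀ e : Fin n → ℝ, eunorm e ^ 2 ≤ e ⬝ᵥ (P t).mulVec e)
    (hPL : ∀ e : Fin n → ℝ, eunorm ((P t₀).mulVec e) ≤ L * eunorm e)
    (d : ℝ → ℝ)
    (hdc : ContinuousOn d (Set.Ici t₀))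
    (hd1 : ∀ t, t₀ + 1 ≤ t → c₁ < d t)
    (hdint : ∀ t₁ t₂, t₀ ≤ t₁ → t₁ ≤ t₂ → -c₂ < ∫ s in t₁..t₂, d s)
    (h17c : ∀ t, t₀ ≤ t → ∀ q ∈ Q t, ∀ x : Fin n → ℝ, eunorm x ≤ β t R →
        ∀ e : Fin n → ℝ, (H t).mulVec e = 0 → eunorm e ≤ ξ → g t ≤ e ⬝ᵥ (P t).mulVec e →
        ∀ y ∈ YR H sol R t,
          e ⬝ᵥ (P t).mulVec ((A t q x e y).mulVec e) + (1 / 2) * (e ⬝ᵥ (P' t).mulVec e)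
            ≤ -(d t) * (e ⬝ᵥ (P t).mulVec e)) :
    ∃ dbar : ℝ → ℝ, ContinuousOn dbar (Set.Ici t₀) ∧
      (∀ t, t₀ ≤ t → dbar t < d t) ∧
      (∀ t, t₀ + 1 ≤ t → c₁ ≤ dbar t) ∧
      (∀ t₁ t₂, t₀ ≤ t₁ → t₁ ≤ t₂ → -(2 * c₂) < ∫ s in t₁..t₂, dbar s) ∧
      ∃ φ φ' : ℝ → ℝ,
        (∀ t, t₀ ≤ t → 0 < φ t) ∧
        ContinuousOn φ' (Set.Ici t₀) ∧
        (∀ t, t₀ ≤ t → HasDerivWithinAt φ (φ' t) (Set.Ici t₀) t) ∧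
        (∀ t, t₀ ≤ t → ∀ q ∈ Q t, ∀ x : Fin n → ℝ, eunorm x ≤ β t R →
          ∀ e : Fin n → ℝ, eunorm e ≤ ξ → g t ≤ e ⬝ᵥ (P t).mulVec e →
          ∀ y ∈ YR H sol R t,
            e ⬝ᵥ (P t).mulVec ((A t q x e y).mulVec e) + (1 / 2) * (e ⬝ᵥ (P' t).mulVec e)
              ≤ φ t * eunorm ((H t).mulVec e) ^ 2 - dbar t * (e ⬝ᵥ (P t).mulVec e)) := by
  classical
  set μf : ℝ → ℝ := fun t => min ((d (max t (t₀+1)) - c₁)/2) (c₂/2 * Real.exp (t₀ - t)) with hμf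
  have hμcont : ContinuousOn μf (Set.Ici t₀) := by
    have h1 : ContinuousOn (fun t => (d (max t (t₀+1)) - c₁)/2) (Set.Ici t₀) := by
      apply ContinuousOn.div_const
      apply ContinuousOn.sub _ continuousOn_const
      exact hdc.comp ((continuous_id.max continuous_const).continuousOn)
        (fun t _ => le_trans (by linarith) (le_max_right t (t₀+1)))
    have h2 : Continuous (fun t : ℝ => c₂/2 * Real.exp (t₀ - t)) :=
      continuous_const.mul (Real.continuous_exp.comp (continuous_const.sub continuous_id))
    exact continuous_min.comp_continuousOn (h1.prodMk h2.continuousOn)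
  have hμpos : ∀ t, t₀ ≤ t → 0 < μf t := by
    intro t ht
    apply lt_min
    · have := hd1 (max t (t₀+1)) (le_max_right t (t₀+1)); linarith
    · positivity
  have hμle2 : ∀ t, μf t ≤ c₂/2 * Real.exp (t₀ - t) := fun t => min_le_right _ _
  have hμle1 : ∀ t, t₀ + 1 ≤ t → μf t ≤ (d t - c₁)/2 := by
    intro t ht
    simp only [hμf]
    rw [max_eq_left ht]
    exact min_le_left _ _
  set dbar : ℝ → ℝ := fun t => d t - μf t with hdbardef
  have hdbarc : ContinuousOn dbar (Set.Ici t₀) := hdc.sub hμcont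
  have hμInt : ∀ t₁ t₂, t₀ ≤ t₁ → t₁ ≤ t₂ → IntervalIntegrable μf MeasureTheory.volume t₁ t₂ := by
    intro t₁ t₂ h1 h2
    apply ContinuousOn.intervalIntegrable
    apply hμcont.mono
    rw [Set.uIcc_of_le h2]; exact fun s hs => le_trans h1 hs.1
  have hdInt : ∀ t₁ t₂, t₀ ≤ t₁ → t₁ ≤ t₂ → IntervalIntegrable d MeasureTheory.volume t₁ t₂ := by
    intro t₁ t₂ h1 h2
    apply ContinuousOn.intervalIntegrable
    apply hdc.mono
    rw [Set.uIcc_of_le h2]; exact fun s hs => le_trans h1 hs.1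
  have hint : ∀ t₁ t₂, t₀ ≤ t₁ → t₁ ≤ t₂ → -(2*c₂) < ∫ s in t₁..t₂, dbar s := by
    intro t₁ t₂ h1 h2
    have e1 : ∫ s in t₁..t₂, dbar s = (∫ s in t₁..t₂, d s) - ∫ s in t₁..t₂, μf s :=
      intervalIntegral.integral_sub (hdInt t₁ t₂ h1 h2) (hμInt t₁ t₂ h1 h2)
    have e2 : ∫ s in t₁..t₂, μf s ≤ ∫ s in t₁..t₂, c₂/2 * Real.exp (t₀ - s) := by
      apply intervalIntegral.integral_mono_on h2 (hμInt t₁ t₂ h1 h2)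
        ((continuous_const.mul (Real.continuous_exp.comp (continuous_const.sub continuous_id))).intervalIntegrable _ _)
      intro s _; exact hμle2 s
    have e3 : ∫ s in t₁..t₂, c₂/2 * Real.exp (t₀ - s)
        = c₂/2 * (Real.exp (t₀ - t₁) - Real.exp (t₀ - t₂)) := by
      rw [intervalIntegral.integral_const_mul,
        intervalIntegral.integral_comp_sub_left (fun x => Real.exp x) t₀, integral_exp]
    have e4 : Real.exp (t₀ - t₁) ≤ 1 := Real.exp_le_one_iff.mpr (by linarith)
    have e5 : 0 < Real.exp (t₀ - t₂) := Real.exp_pos _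
    have e6 := hdint t₁ t₂ h1 h2
    rw [e1]; nlinarith
  have key : ∀ T, t₀ ≤ T → ∃ c, 1 ≤ c ∧ ∀ t ∈ Set.Icc t₀ T, ∀ q ∈ Q t, ∀ x : Fin n → ℝ,
      eunorm x ≤ β t R → ∀ e : Fin n → ℝ, eunorm e ≤ ξ → g t ≤ e ⬝ᵥ (P t).mulVec e →
      ∀ y ∈ YR H sol R t,
        e ⬝ᵥ (P t).mulVec ((A t q x e y).mulVec e) + (1 / 2) * (e ⬝ᵥ (P' t).mulVec e)
          + dbar t * (e ⬝ᵥ (P t).mulVec e) ≤ c * eunorm ((H t).mulVec e) ^ 2 := by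
    intro T hT
    by_contra hcon
    push_neg at hcon
    have hsel : ∀ m : ℕ, ∃ t, t ∈ Set.Icc t₀ T ∧ ∃ q, q ∈ Q t ∧ ∃ x : Fin n → ℝ,
        eunorm x ≤ β t R ∧ ∃ e : Fin n → ℝ, eunorm e ≤ ξ ∧ g t ≤ e ⬝ᵥ (P t).mulVec e ∧
        ∃ y, y ∈ YR H sol R t ∧
          ((m:ℝ)+1) * eunorm ((H t).mulVec e) ^ 2 <
            e ⬝ᵥ (P t).mulVec ((A t q x e y).mulVec e) + (1 / 2) * (e ⬝ᵥ (P' t).mulVec e)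
              + dbar t * (e ⬝ᵥ (P t).mulVec e) := by
      intro m
      have hm : (1:ℝ) ≤ (m:ℝ) + 1 := by
        have := Nat.cast_nonneg (α := ℝ) m; linarith
      exact hcon ((m:ℝ)+1) hm
    choose tt htt qq hqq xx hxx ee hee hge yy hyy hlt using hsel
    have h0T : (0:ℝ) ≤ T := le_trans ht₀ hT
    -- bound on entries of H on [0, T]
    obtain ⟨CH0, hCH0⟩ : ∃ C, ∀ s ∈ Set.Icc (0:ℝ) T, ‖∑ i, ∑ j, |H s i j|‖ ≤ C := by
      apply IsCompact.exists_bound_of_continuousOn isCompact_Icc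
      apply continuousOn_finset_sum
      intro i _
      apply continuousOn_finset_sum
      intro j _
      exact ((hH i j).mono (fun s hs => hs.1)).abs
    set CH : ℝ := max CH0 0 with hCHdef
    have hCHnn : 0 ≤ CH := le_max_right _ _
    have hCHentry : ∀ s ∈ Set.Icc (0:ℝ) T, ∀ i, ∑ j, |H s i j| ≤ CH := by
      intro s hs i
      have h1 : ∑ j, |H s i j| ≤ ∑ i', ∑ j, |H s i' j| :=
        Finset.single_le_sum (f := fun i' => ∑ j, |H s i' j|)
          (fun i' _ => Finset.sum_nonneg fun j _ => abs_nonneg _) (Finset.mem_univ i)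
      have h2 := hCH0 s hs
      rw [Real.norm_eq_abs] at h2
      have h3 := le_abs_self (∑ i', ∑ j, |H s i' j|)
      exact le_trans (le_trans h1 h3) (le_trans h2 (le_max_left _ _))
    set Bx : ℝ := β T R with hBxdef
    have hBx0 : 0 ≤ Bx := hβ0 T R
    -- bound on coordinates of mulVec images
    have hmulbd : ∀ s ∈ Set.Icc (0:ℝ) T, ∀ v : Fin n → ℝ, eunorm v ≤ Bx → ∀ i,
        |((H s).mulVec v) i| ≤ CH * Bx := by
      intro s hs v hv i
      have h1 : |((H s).mulVec v) i| ≤ ∑ j, |H s i j * v j| := by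
        simp only [Matrix.mulVec, dotProduct]
        exact Finset.abs_sum_le_sum_abs _ _
      have h2 : ∀ j, |H s i j * v j| ≤ |H s i j| * Bx := by
        intro j
        rw [abs_mul]
        exact mul_le_mul_of_nonneg_left (le_trans (abs_le_eunorm v j) hv) (abs_nonneg _)
      calc |((H s).mulVec v) i| ≤ ∑ j, |H s i j * v j| := h1
        _ ≤ ∑ j, |H s i j| * Bx := Finset.sum_le_sum fun j _ => h2 j
        _ = (∑ j, |H s i j|) * Bx := by rw [Finset.sum_mul]
        _ ≤ CH * Bx := mul_le_mul_of_nonneg_right (hCHentry s hs i) hBx0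
    -- bound on F along solutions
    obtain ⟨MF0, hMF0⟩ : ∃ C, ∀ p ∈ (Set.Icc (0:ℝ) T ×ˢ (Metric.closedBall (0 : Fin n → ℝ) Bx ×ˢ
        Metric.closedBall (0 : Fin nout → ℝ) (CH * Bx))), ‖F p.1 p.2.1 p.2.2‖ ≤ C := by
      apply IsCompact.exists_bound_of_continuousOn
        (isCompact_Icc.prod ((isCompact_closedBall _ _).prod (isCompact_closedBall _ _)))
      exact hFcont.mono (fun p hp => ⟨hp.1.1, trivial⟩)
    set MF : ℝ := max MF0 0 with hMFdef
    have hMFnn : 0 ≤ MF := le_max_right _ _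
    have hsolIn : ∀ τ (xo : Fin n → ℝ), 0 ≤ τ → eunorm xo ≤ R → ∀ s, τ ≤ s → s ≤ T →
        eunorm (sol τ xo s) ≤ Bx := by
      intro τ xo hτ hxo s hτs hsT
      exact le_trans (hsolbd τ hτ xo s hτs) (hβmono s T (eunorm xo) R hsT hxo)
    have hsolLip : ∀ τ (xo : Fin n → ℝ), 0 ≤ τ → eunorm xo ≤ R → ∀ a b, τ ≤ a → τ ≤ b →
        a ≤ T → b ≤ T → ‖sol τ xo b - sol τ xo a‖ ≤ MF * |b - a| := by
      intro τ xo hτ hxo a b ha hb haT hbT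
      have hbound : ∀ s ∈ Set.Icc τ T,
          ‖F s (sol τ xo s) ((H s).mulVec (sol τ xo s))‖ ≤ MF := by
        intro s hs
        have hsol : eunorm (sol τ xo s) ≤ Bx := hsolIn τ xo hτ hxo s hs.1 hs.2
        have hs0T : s ∈ Set.Icc (0:ℝ) T := ⟨le_trans hτ hs.1, hs.2⟩
        have hmem : ((s, sol τ xo s, (H s).mulVec (sol τ xo s)) :
            ℝ × (Fin n → ℝ) × (Fin nout → ℝ)) ∈ Set.Icc (0:ℝ) T ×ˢ
            (Metric.closedBall (0 : Fin n → ℝ) Bx ×ˢ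
              Metric.closedBall (0 : Fin nout → ℝ) (CH * Bx)) := by
        
          refine ⟨hs0T, ?_, ?_⟩
          · rw [Metric.mem_closedBall, dist_zero_right]
            exact le_trans (norm_le_eunorm _) hsol
          · rw [Metric.mem_closedBall, dist_zero_right]
            rw [pi_norm_le_iff_of_nonneg (by positivity)]
            intro i
            rw [Real.norm_eq_abs]
            exact hmulbd s hs0T _ hsol i
        exact le_trans (hMF0 _ hmem) (le_max_left _ _)
      have h := Convex.norm_image_sub_le_of_norm_hasDerivWithin_le (s := Set.Icc τ T)
        (f := sol τ xo) (f' := fun s => F s (sol τ xo s) ((H s).mulVec (sol τ xo s)))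
        (fun s hs => (hsolode τ hτ xo s hs.1).mono Set.Icc_subset_Ici_self)
        hbound (convex_Icc τ T) ⟨ha, haT⟩ ⟨hb, hbT⟩
      rwa [Real.norm_eq_abs] at h
    -- sequential compactness
    set Bp : Set (ℝ × (Fin n → ℝ) × (Fin n → ℝ) × (Fin nout → ℝ)) :=
      Set.Icc t₀ T ×ˢ Metric.closedBall 0 Bx ×ˢ Metric.closedBall 0 ξ ×ˢ
        Metric.closedBall 0 (CH * Bx) with hBpdef
    have hBpbd : Bornology.IsBounded Bp :=
      (Metric.isBounded_Icc t₀ T).prod (Metric.isBounded_closedBall.prod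
        (Metric.isBounded_closedBall.prod Metric.isBounded_closedBall))
    have hBpcl : IsClosed Bp :=
      isClosed_Icc.prod (Metric.isClosed_closedBall.prod
        (Metric.isClosed_closedBall.prod Metric.isClosed_closedBall))
    have httc : ∀ m, tt m ∈ Set.Icc (0:ℝ) T := fun m => ⟨le_trans ht₀ (htt m).1, (htt m).2⟩
    have hmemBp : ∀ m, ((tt m, xx m, ee m, yy m) :
        ℝ × (Fin n → ℝ) × (Fin n → ℝ) × (Fin nout → ℝ)) ∈ Bp := by
      intro m
      refine ⟨htt m, ?_, ?_, ?_⟩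
      · rw [Metric.mem_closedBall, dist_zero_right]
        exact le_trans (norm_le_eunorm _) (le_trans (hxx m)
          (hβmono (tt m) T R R (htt m).2 le_rfl))
      · rw [Metric.mem_closedBall, dist_zero_right]
        exact le_trans (norm_le_eunorm _) (hee m)
      · rw [Metric.mem_closedBall, dist_zero_right]
        obtain ⟨τ, xo, hτ0, hτle, hxoR, hyeq⟩ := hyy m
        rw [pi_norm_le_iff_of_nonneg (by positivity)]
        intro i
        rw [Real.norm_eq_abs, hyeq]
        exact hmulbd (tt m) (httc m) _ (hsolIn τ xo hτ0 hxoR (tt m) hτle (htt m).2) i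
    obtain ⟨a, haBp, φ₁, hφ₁, hconv⟩ := tendsto_subseq_of_bounded hBpbd hmemBp
    rw [hBpcl.closure_eq] at haBp
    obtain ⟨ts, xs, es, ys⟩ := a
    obtain ⟨hts, hxsB, hesB, hysB⟩ := haBp
    have hts0 : t₀ ≤ ts := hts.1
    have htsT : ts ≤ T := hts.2
    have hts0' : (0:ℝ) ≤ ts := le_trans ht₀ hts0
    have htconv : Tendsto (fun ν => tt (φ₁ ν)) atTop (nhds ts) :=
      (continuous_fst.tendsto _).comp hconv
    -- CP for Q
    obtain ⟨φ₂, hφ₂, qs, hqsQ, hqconv⟩ := hQcp (fun ν => tt (φ₁ ν)) (fun ν => qq (φ₁ ν)) ts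
      (fun ν => le_trans ht₀ (htt (φ₁ ν)).1) hts0' htconv (fun ν => hqq (φ₁ ν))
    set σ : ℕ → ℕ := φ₁ ∘ φ₂ with hσdef
    have hσ : StrictMono σ := hφ₁.comp hφ₂
    have hTt : Tendsto (fun ν => tt (σ ν)) atTop (nhds ts) :=
      htconv.comp hφ₂.tendsto_atTop
    have hXt : Tendsto (fun ν => xx (σ ν)) atTop (nhds xs) :=
      ((continuous_fst.comp continuous_snd).tendsto _).comp (hconv.comp hφ₂.tendsto_atTop)
    have hEt : Tendsto (fun ν => ee (σ ν)) atTop (nhds es) :=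
      ((continuous_fst.comp (continuous_snd.comp continuous_snd)).tendsto _).comp
        (hconv.comp hφ₂.tendsto_atTop)
    have hYt : Tendsto (fun ν => yy (σ ν)) atTop (nhds ys) :=
      ((continuous_snd.comp (continuous_snd.comp continuous_snd)).tendsto _).comp
        (hconv.comp hφ₂.tendsto_atTop)
    have hQt : Tendsto (fun ν => qq (σ ν)) atTop (nhds qs) := hqconv
    have hEj : ∀ j, Tendsto (fun ν => ee (σ ν) j) atTop (nhds (es j)) :=
      fun j => ((continuous_apply j).tendsto _).comp hEt
    -- tendsto within filters
    have hTt₀ : Tendsto (fun ν => tt (σ ν)) atTop (nhdsWithin ts (Set.Ici t₀)) :=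
      tendsto_nhdsWithin_iff.mpr ⟨hTt, Filter.Eventually.of_forall fun ν => (htt (σ ν)).1⟩
    have hTt0 : Tendsto (fun ν => tt (σ ν)) atTop (nhdsWithin ts (Set.Ici 0)) :=
      tendsto_nhdsWithin_iff.mpr ⟨hTt,
        Filter.Eventually.of_forall fun ν => le_trans ht₀ (htt (σ ν)).1⟩
    have hPlim : ∀ i j, Tendsto (fun ν => P (tt (σ ν)) i j) atTop (nhds (P ts i j)) :=
      fun i j => Filter.Tendsto.comp ((hPd ts hts0 i j).continuousWithinAt) hTt₀
    have hP'lim : ∀ i j, Tendsto (fun ν => P' (tt (σ ν)) i j) atTop (nhds (P' ts i j)) :=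
      fun i j => Filter.Tendsto.comp (hP'c i j ts hts0) hTt₀
    have hHlim : ∀ i j, Tendsto (fun ν => H (tt (σ ν)) i j) atTop (nhds (H ts i j)) :=
      fun i j => Filter.Tendsto.comp (hH i j ts hts0') hTt0
    have hdbarlim : Tendsto (fun ν => dbar (tt (σ ν))) atTop (nhds (dbar ts)) :=
      Filter.Tendsto.comp (hdbarc ts hts0) hTt₀
    have hglimseq : Tendsto (fun ν => g (tt (σ ν))) atTop (nhds (g ts)) :=
      Filter.Tendsto.comp ((hgd ts hts0').continuousWithinAt) hTt0
    -- A limit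
    have hAlim : ∀ i j, Tendsto
        (fun ν => A (tt (σ ν)) (qq (σ ν)) (xx (σ ν)) (ee (σ ν)) (yy (σ ν)) i j)
        atTop (nhds (A ts qs xs es ys i j)) := by
      have hp : Tendsto (fun ν => ((tt (σ ν), qq (σ ν), xx (σ ν), ee (σ ν), yy (σ ν)) :
          ℝ × (Fin ℓ → ℝ) × (Fin n → ℝ) × (Fin n → ℝ) × (Fin nout → ℝ))) atTop
          (nhdsWithin (ts, qs, xs, es, ys) (Set.Ici 0 ×ˢ Set.univ)) := by
        rw [tendsto_nhdsWithin_iff]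
        constructor
        · exact hTt.prodMk_nhds (hQt.prodMk_nhds (hXt.prodMk_nhds (hEt.prodMk_nhds hYt)))
        · exact Filter.Eventually.of_forall fun ν => ⟨le_trans ht₀ (htt (σ ν)).1, trivial⟩
      have hA := Filter.Tendsto.comp (hAcont (ts, qs, xs, es, ys) ⟨hts0', trivial⟩) hp
      intro i j
      exact (((continuous_apply j).comp (continuous_apply i)).tendsto _).comp hA
    -- numeric limits
    have hquadlim : Tendsto (fun ν => ee (σ ν) ⬝ᵥ (P (tt (σ ν))).mulVec (ee (σ ν))) atTop
        (nhds (es ⬝ᵥ (P ts).mulVec es)) :=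
      tendsto_dotProduct hEj (fun i => tendsto_mulVec_apply hPlim hEj i)
    have hflim : Tendsto (fun ν =>
        ee (σ ν) ⬝ᵥ (P (tt (σ ν))).mulVec
            ((A (tt (σ ν)) (qq (σ ν)) (xx (σ ν)) (ee (σ ν)) (yy (σ ν))).mulVec (ee (σ ν)))
          + (1 / 2) * (ee (σ ν) ⬝ᵥ (P' (tt (σ ν))).mulVec (ee (σ ν)))
          + dbar (tt (σ ν)) * (ee (σ ν) ⬝ᵥ (P (tt (σ ν))).mulVec (ee (σ ν)))) atTop
        (nhds (es ⬝ᵥ (P ts).mulVec ((A ts qs xs es ys).mulVec es)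
          + (1 / 2) * (es ⬝ᵥ (P' ts).mulVec es) + dbar ts * (es ⬝ᵥ (P ts).mulVec es))) := by
      refine Filter.Tendsto.add (Filter.Tendsto.add ?_ ?_) ?_
      · exact tendsto_dotProduct hEj (fun i => tendsto_mulVec_apply hPlim
          (fun j => tendsto_mulVec_apply hAlim hEj j) i)
      · exact tendsto_const_nhds.mul
          (tendsto_dotProduct hEj (fun i => tendsto_mulVec_apply hP'lim hEj i))
      · exact hdbarlim.mul hquadlim
    have hklim : Tendsto (fun ν => eunorm ((H (tt (σ ν))).mulVec (ee (σ ν))) ^ 2) atTop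
        (nhds (eunorm ((H ts).mulVec es) ^ 2)) := by
      have hv : Tendsto (fun ν => (H (tt (σ ν))).mulVec (ee (σ ν))) atTop
          (nhds ((H ts).mulVec es)) :=
        tendsto_pi_nhds.mpr (fun i => tendsto_mulVec_apply hHlim hEj i)
      exact ((continuous_eunorm.tendsto _).comp hv).pow 2
    have hfpos : ∀ ν, (0:ℝ) ≤
        ee (σ ν) ⬝ᵥ (P (tt (σ ν))).mulVec
            ((A (tt (σ ν)) (qq (σ ν)) (xx (σ ν)) (ee (σ ν)) (yy (σ ν))).mulVec (ee (σ ν)))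
          + (1 / 2) * (ee (σ ν) ⬝ᵥ (P' (tt (σ ν))).mulVec (ee (σ ν)))
          + dbar (tt (σ ν)) * (ee (σ ν) ⬝ᵥ (P (tt (σ ν))).mulVec (ee (σ ν))) := by
      intro ν
      have h1 := hlt (σ ν)
      have h2 : (0:ℝ) ≤ ((σ ν : ℝ)+1) * eunorm ((H (tt (σ ν))).mulVec (ee (σ ν))) ^ 2 := by
        have := Nat.cast_nonneg (α := ℝ) (σ ν)
        positivity
      linarith
    rcases eq_or_ne ((H ts).mulVec es) 0 with hkz | hknz
    · -- limit vector is in kernel: contradiction via h17c extended to closure of YR ts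
      have hyy' := hyy
      simp only [YR, Set.mem_setOf_eq] at hyy'
      choose τ xo hτ0 hτle hxoR hyeq using hyy'
      set w : ℕ → Fin nout → ℝ :=
        fun ν => (H ts).mulVec (sol (min (τ (σ ν)) ts) (xo (σ ν)) ts) with hwdef
      have hwY : ∀ ν, w ν ∈ YR H sol R ts := fun ν =>
        ⟨min (τ (σ ν)) ts, xo (σ ν), le_min (hτ0 _) hts0', min_le_right _ _, hxoR _, rfl⟩
      have hSS : ∀ ν, ‖sol (min (τ (σ ν)) ts) (xo (σ ν)) ts
          - sol (τ (σ ν)) (xo (σ ν)) (tt (σ ν))‖ ≤ MF * |tt (σ ν) - ts| := by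
        intro ν
        rcases le_total (τ (σ ν)) ts with hcase | hcase
        · rw [min_eq_left hcase]
          have h := hsolLip (τ (σ ν)) (xo (σ ν)) (hτ0 _) (hxoR _) (tt (σ ν)) ts
            (hτle _) hcase (htt (σ ν)).2 htsT
          rwa [abs_sub_comm] at h
        · rw [min_eq_right hcase]
          have e0 : sol ts (xo (σ ν)) ts = xo (σ ν) := hsol0 ts hts0' _
          have e1 : sol (τ (σ ν)) (xo (σ ν)) (τ (σ ν)) = xo (σ ν) := hsol0 _ (hτ0 _) _
          rw [e0]
          have h := hsolLip (τ (σ ν)) (xo (σ ν)) (hτ0 _) (hxoR _) (tt (σ ν)) (τ (σ ν))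
            (hτle _) le_rfl (htt (σ ν)).2 (le_trans (hτle _) (htt (σ ν)).2)
          rw [e1] at h
          refine h.trans (mul_le_mul_of_nonneg_left ?_ hMFnn)
          have h1 : τ (σ ν) ≤ tt (σ ν) := hτle _
          have h2 : ts ≤ τ (σ ν) := hcase
          have e2 : |τ (σ ν) - tt (σ ν)| = tt (σ ν) - τ (σ ν) := by
            rw [abs_sub_comm, abs_of_nonneg (by linarith : (0:ℝ) ≤ tt (σ ν) - τ (σ ν))]
          have e3 : |tt (σ ν) - ts| = tt (σ ν) - ts := abs_of_nonneg (by linarith)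
          rw [e2, e3]
          linarith
      have habs0 : Tendsto (fun ν => |tt (σ ν) - ts|) atTop (nhds 0) := by
        have h := (hTt.sub (tendsto_const_nhds (x := ts))).abs
        simpa using h
      have hwdiff : Tendsto (fun ν => w ν - yy (σ ν)) atTop (nhds 0) := by
        rw [tendsto_pi_nhds]
        intro i
        have hrew : ∀ ν, (w ν - yy (σ ν)) i =
            ∑ j, (H ts i j * ((sol (min (τ (σ ν)) ts) (xo (σ ν)) ts) j
                  - (sol (τ (σ ν)) (xo (σ ν)) (tt (σ ν))) j)
              + (H ts i j - H (tt (σ ν)) i j) * (sol (τ (σ ν)) (xo (σ ν)) (tt (σ ν))) j) := by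
          intro ν
          rw [Pi.sub_apply, hyeq (σ ν)]
          simp only [hwdef, Matrix.mulVec, dotProduct, ← Finset.sum_sub_distrib]
          apply Finset.sum_congr rfl
          intro j _
          ring
        have hterm : ∀ j : Fin n, Tendsto (fun ν =>
            H ts i j * ((sol (min (τ (σ ν)) ts) (xo (σ ν)) ts) j
                - (sol (τ (σ ν)) (xo (σ ν)) (tt (σ ν))) j)
              + (H ts i j - H (tt (σ ν)) i j) * (sol (τ (σ ν)) (xo (σ ν)) (tt (σ ν))) j)
            atTop (nhds 0) := by
          intro j
          have hterm1 : Tendsto (fun ν => H ts i j * ((sol (min (τ (σ ν)) ts) (xo (σ ν)) ts) j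
              - (sol (τ (σ ν)) (xo (σ ν)) (tt (σ ν))) j)) atTop (nhds 0) := by
            apply squeeze_zero_norm (a := fun ν => |H ts i j| * (MF * |tt (σ ν) - ts|))
            · intro ν
              rw [Real.norm_eq_abs, abs_mul]
              apply mul_le_mul_of_nonneg_left _ (abs_nonneg _)
              exact le_trans (norm_le_pi_norm (sol (min (τ (σ ν)) ts) (xo (σ ν)) ts
                - sol (τ (σ ν)) (xo (σ ν)) (tt (σ ν))) j) (hSS ν)
            · have h := tendsto_const_nhds (x := |H ts i j|) (f := atTop (α := ℕ)) |>.mul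
                ((tendsto_const_nhds (x := MF) (f := atTop (α := ℕ))).mul habs0)
              simpa using h
          have hterm2 : Tendsto (fun ν =>
              (H ts i j - H (tt (σ ν)) i j) * (sol (τ (σ ν)) (xo (σ ν)) (tt (σ ν))) j)
              atTop (nhds 0) := by
            apply squeeze_zero_norm (a := fun ν => |H ts i j - H (tt (σ ν)) i j| * Bx)
            · intro ν
              rw [Real.norm_eq_abs, abs_mul]
              apply mul_le_mul_of_nonneg_left _ (abs_nonneg _)
              exact le_trans (abs_le_eunorm _ j)
                (hsolIn _ _ (hτ0 _) (hxoR _) _ (hτle _) (htt (σ ν)).2)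
            · have hd0 : Tendsto (fun ν => |H ts i j - H (tt (σ ν)) i j|) atTop (nhds 0) := by
                have h := ((tendsto_const_nhds (x := H ts i j) (f := atTop (α := ℕ))).sub
                  (hHlim i j)).abs
                simpa using h
              have h := hd0.mul (tendsto_const_nhds (x := Bx))
              simpa using h
          have h := hterm1.add hterm2
          simpa using h
        have h := tendsto_finset_sum Finset.univ (fun j _ => hterm j)
        have h0 : ∑ j : Fin n, (0:ℝ) = 0 := Finset.sum_const_zero
        rw [h0] at h
        exact h.congr (fun ν => (hrew ν).symm)
      have hwlim : Tendsto w atTop (nhds ys) := by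
        have h := hwdiff.add hYt
        simp only [zero_add] at h
        exact h.congr (fun ν => by funext i; simp)
      -- limit admissibility
      have hxs : eunorm xs ≤ β ts R := by
        refine le_of_tendsto_of_tendsto' ((continuous_eunorm.tendsto _).comp hXt)
          (Filter.Tendsto.comp (hβcont.tendsto (ts, R))
            (hTt.prodMk_nhds tendsto_const_nhds)) (fun ν => ?_)
        exact hxx (σ ν)
      have hes : eunorm es ≤ ξ :=
        le_of_tendsto' ((continuous_eunorm.tendsto _).comp hEt) (fun ν => hee (σ ν))
      have hges : g ts ≤ es ⬝ᵥ (P ts).mulVec es :=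
        le_of_tendsto_of_tendsto' hglimseq hquadlim (fun ν => hge (σ ν))
      have hbd : ∀ ν, es ⬝ᵥ (P ts).mulVec ((A ts qs xs es (w ν)).mulVec es)
          + (1 / 2) * (es ⬝ᵥ (P' ts).mulVec es) ≤ -(d ts) * (es ⬝ᵥ (P ts).mulVec es) :=
        fun ν => h17c ts hts0 qs hqsQ xs hxs es hkz hes hges (w ν) (hwY ν)
      have hAy : ∀ i j, Tendsto (fun ν => A ts qs xs es (w ν) i j) atTop
          (nhds (A ts qs xs es ys i j)) := by
        have hp : Tendsto (fun ν => ((ts, qs, xs, es, w ν) :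
            ℝ × (Fin ℓ → ℝ) × (Fin n → ℝ) × (Fin n → ℝ) × (Fin nout → ℝ))) atTop
            (nhdsWithin (ts, qs, xs, es, ys) (Set.Ici 0 ×ˢ Set.univ)) := by
          rw [tendsto_nhdsWithin_iff]
          constructor
          · exact tendsto_const_nhds.prodMk_nhds (tendsto_const_nhds.prodMk_nhds
              (tendsto_const_nhds.prodMk_nhds (tendsto_const_nhds.prodMk_nhds hwlim)))
          · exact Filter.Eventually.of_forall fun ν => ⟨hts0', trivial⟩
        have hA := Filter.Tendsto.comp (hAcont (ts, qs, xs, es, ys) ⟨hts0', trivial⟩) hp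
        intro i j
        exact (((continuous_apply j).comp (continuous_apply i)).tendsto _).comp hA
      have hfy : Tendsto (fun ν => es ⬝ᵥ (P ts).mulVec ((A ts qs xs es (w ν)).mulVec es)
          + (1 / 2) * (es ⬝ᵥ (P' ts).mulVec es)) atTop
          (nhds (es ⬝ᵥ (P ts).mulVec ((A ts qs xs es ys).mulVec es)
            + (1 / 2) * (es ⬝ᵥ (P' ts).mulVec es))) := by
        have hAyv : ∀ j', Tendsto (fun ν => ((A ts qs xs es (w ν)).mulVec es) j') atTop
            (nhds (((A ts qs xs es ys).mulVec es) j')) :=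
          fun j' => tendsto_mulVec_apply (vν := fun _ => es) (v := es) hAy (fun _ => tendsto_const_nhds) j'
        have hPAv : ∀ i', Tendsto
            (fun ν => ((P ts).mulVec ((A ts qs xs es (w ν)).mulVec es)) i')
            atTop (nhds (((P ts).mulVec ((A ts qs xs es ys).mulVec es)) i')) :=
          fun i' => tendsto_mulVec_apply (Mν := fun _ => P ts) (M := P ts) (fun _ _ => tendsto_const_nhds) hAyv i'
        exact Filter.Tendsto.add
          (tendsto_dotProduct (uν := fun _ => es) (u := es) (fun _ => tendsto_const_nhds) hPAv) tendsto_const_nhds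
      have hfinal1 : es ⬝ᵥ (P ts).mulVec ((A ts qs xs es ys).mulVec es)
          + (1 / 2) * (es ⬝ᵥ (P' ts).mulVec es) ≤ -(d ts) * (es ⬝ᵥ (P ts).mulVec es) :=
        le_of_tendsto hfy (Filter.Eventually.of_forall hbd)
      have hf0 : (0:ℝ) ≤ es ⬝ᵥ (P ts).mulVec ((A ts qs xs es ys).mulVec es)
          + (1 / 2) * (es ⬝ᵥ (P' ts).mulVec es) + dbar ts * (es ⬝ᵥ (P ts).mulVec es) :=
        ge_of_tendsto hflim (Filter.Eventually.of_forall hfpos)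
      have hgpos : 0 < g ts := (hg01 ts hts0').1
      have hμts : 0 < μf ts := hμpos ts hts0
      have hdbareq : dbar ts = d ts - μf ts := rfl
      nlinarith [mul_le_mul_of_nonneg_left hges (le_of_lt hμts)]
    · -- limit vector not in kernel: ratio blows up
      have hkpos : 0 < eunorm ((H ts).mulVec es) ^ 2 := by
        have h1 : 0 < eunorm ((H ts).mulVec es) :=
          lt_of_le_of_ne (eunorm_nonneg _) (fun h => hknz (eunorm_eq_zero h.symm))
        positivity
      have hcinf : Tendsto (fun ν => ((σ ν : ℝ) + 1)) atTop atTop :=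
        tendsto_atTop_add_const_right _ 1 (tendsto_natCast_atTop_atTop.comp hσ.tendsto_atTop)
      have hck : Tendsto (fun ν => ((σ ν : ℝ) + 1)
          * eunorm ((H (tt (σ ν))).mulVec (ee (σ ν))) ^ 2) atTop atTop :=
        hcinf.atTop_mul_pos hkpos hklim
      set fstar := es ⬝ᵥ (P ts).mulVec ((A ts qs xs es ys).mulVec es)
        + (1 / 2) * (es ⬝ᵥ (P' ts).mulVec es) + dbar ts * (es ⬝ᵥ (P ts).mulVec es) with hfstar
      have h1 : ∀ᶠ ν in atTop, fstar + 1 < ((σ ν : ℝ) + 1)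
          * eunorm ((H (tt (σ ν))).mulVec (ee (σ ν))) ^ 2 :=
        hck.eventually_gt_atTop _
      have h2 : ∀ᶠ ν in atTop,
          ee (σ ν) ⬝ᵥ (P (tt (σ ν))).mulVec
              ((A (tt (σ ν)) (qq (σ ν)) (xx (σ ν)) (ee (σ ν)) (yy (σ ν))).mulVec (ee (σ ν)))
            + (1 / 2) * (ee (σ ν) ⬝ᵥ (P' (tt (σ ν))).mulVec (ee (σ ν)))
            + dbar (tt (σ ν)) * (ee (σ ν) ⬝ᵥ (P (tt (σ ν))).mulVec (ee (σ ν)))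
            < fstar + 1 :=
        hflim.eventually_lt_const (lt_add_one fstar)
      obtain ⟨ν, hν1, hν2⟩ := (h1.and h2).exists
      have h3 := hlt (σ ν)
      exact lt_irrefl (fstar + 1) (lt_trans (lt_trans hν1 h3) hν2)

  set Cs : ℝ → Set ℝ := fun T => {c | 1 ≤ c ∧ ∀ t ∈ Set.Icc t₀ T, ∀ q ∈ Q t, ∀ x : Fin n → ℝ,
      eunorm x ≤ β t R → ∀ e : Fin n → ℝ, eunorm e ≤ ξ → g t ≤ e ⬝ᵥ (P t).mulVec e →
      ∀ y ∈ YR H sol R t,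
        e ⬝ᵥ (P t).mulVec ((A t q x e y).mulVec e) + (1 / 2) * (e ⬝ᵥ (P' t).mulVec e)
          + dbar t * (e ⬝ᵥ (P t).mulVec e) ≤ c * eunorm ((H t).mulVec e) ^ 2} with hCsdef
  have hCne : ∀ T, (Cs (max T t₀)).Nonempty := by
    intro T
    obtain ⟨c, hc1, hc2⟩ := key (max T t₀) (le_max_right _ _)
    exact ⟨c, hc1, hc2⟩
  have hCbdd : ∀ T, BddBelow (Cs T) := fun T => ⟨1, fun c hc => hc.1⟩
  have hCmono : ∀ T T', T ≤ T' → Cs T' ⊆ Cs T :=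
    fun T T' h c hc => ⟨hc.1, fun t ht => hc.2 t ⟨ht.1, le_trans ht.2 h⟩⟩
  set ψ : ℝ → ℝ := fun t => sInf (Cs (max t t₀)) with hψdef
  have hψ1 : ∀ t, 1 ≤ ψ t := fun t => le_csInf (hCne t) fun c hc => hc.1
  have hψmono : Monotone ψ := fun t t' h =>
    csInf_le_csInf (hCbdd _) (hCne t') (hCmono _ _ (max_le_max h le_rfl))
  have hψmem : ∀ t, ψ t ∈ Cs (max t t₀) := by
    intro t
    refine ⟨hψ1 t, ?_⟩
    intro s hs q hq x hx e he hge y hy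
    set k := eunorm ((H s).mulVec e) ^ 2 with hk
    have hk0 : (0:ℝ) ≤ k := sq_nonneg _
    set lhs := e ⬝ᵥ (P s).mulVec ((A s q x e y).mulVec e) + (1 / 2) * (e ⬝ᵥ (P' s).mulVec e)
      + dbar s * (e ⬝ᵥ (P s).mulVec e) with hlhs
    have hall : ∀ c ∈ Cs (max t t₀), lhs ≤ c * k :=
      fun c hc => hc.2 s hs q hq x hx e he hge y hy
    rcases hk0.eq_or_lt with h0 | hpos
    · obtain ⟨c₀, hc₀⟩ := hCne t
      have h1 := hall c₀ hc₀
      rw [← h0] at h1 ⊢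
      simpa using h1
    · have hlow : lhs / k ≤ sInf (Cs (max t t₀)) :=
        le_csInf (hCne t) fun c hc => (div_le_iff₀ hpos).2 (hall c hc)
      have : lhs = lhs / k * k := by field_simp
      rw [this]
      exact mul_le_mul_of_nonneg_right hlow hk0
  have hψInt : ∀ a b : ℝ, IntervalIntegrable ψ MeasureTheory.volume a b :=
    fun a b => hψmono.intervalIntegrable
  set ψ₂ : ℝ → ℝ := fun t => ∫ s in t..(t+1), ψ s with hψ₂def
  have hψ₂shift : ∀ t, ψ₂ t = ∫ u in (0:ℝ)..1, ψ (u + t) := by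
    intro t
    simp only [hψ₂def]
    rw [intervalIntegral.integral_comp_add_right ψ t, zero_add, add_comm 1 t]
  have hψ₂mono : Monotone ψ₂ := by
    intro a b hab
    rw [hψ₂shift a, hψ₂shift b]
    have hma : Monotone fun u : ℝ => ψ (u + a) :=
      hψmono.comp fun u v huv => add_le_add_left huv _
    have hmb : Monotone fun u : ℝ => ψ (u + b) :=
      hψmono.comp fun u v huv => add_le_add_left huv _
    exact intervalIntegral.integral_mono_on zero_le_one hma.intervalIntegrable
      hmb.intervalIntegrable (fun u _ => hψmono (by linarith))
  have hψ₂ge : ∀ t, ψ t ≤ ψ₂ t := by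
    intro t
    have h := intervalIntegral.integral_mono_on (a := t) (b := t+1) (by linarith)
      (intervalIntegrable_const (c := ψ t)) (hψInt t (t+1)) (fun s hs => hψmono hs.1)
    simpa [intervalIntegral.integral_const, add_sub_cancel_left] using h
  have hGcont : Continuous fun x : ℝ => ∫ s in (0:ℝ)..x, ψ s :=
    intervalIntegral.continuous_primitive hψInt 0
  have hψ₂eq : ∀ t, ψ₂ t = (∫ s in (0:ℝ)..(t+1), ψ s) - ∫ s in (0:ℝ)..t, ψ s := by
    intro t
    have h := intervalIntegral.integral_add_adjacent_intervals (hψInt 0 t) (hψInt t (t+1))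
    simp only [hψ₂def]; linarith
  have hψ₂cont : Continuous ψ₂ := by
    have : ψ₂ = fun t => (∫ s in (0:ℝ)..(t+1), ψ s) - ∫ s in (0:ℝ)..t, ψ s := funext hψ₂eq
    rw [this]
    exact (hGcont.comp (continuous_id.add continuous_const)).sub hGcont
  set φ : ℝ → ℝ := fun t => ∫ s in t..(t+1), ψ₂ s with hφdef
  set φ' : ℝ → ℝ := fun t => ψ₂ (t+1) - ψ₂ t with hφ'def
  have hψ₂Int : ∀ a b : ℝ, IntervalIntegrable ψ₂ MeasureTheory.volume a b :=
    fun a b => hψ₂cont.intervalIntegrable a b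
  have hφeq : ∀ t, φ t = (∫ s in (0:ℝ)..(t+1), ψ₂ s) - ∫ s in (0:ℝ)..t, ψ₂ s := by
    intro t
    have h := intervalIntegral.integral_add_adjacent_intervals (hψ₂Int 0 t) (hψ₂Int t (t+1))
    simp only [hφdef]; linarith
  have hG2 : ∀ x : ℝ, HasDerivAt (fun u : ℝ => ∫ s in (0:ℝ)..u, ψ₂ s) (ψ₂ x) x := by
    intro x
    exact intervalIntegral.integral_hasDerivAt_right (hψ₂Int 0 x)
      hψ₂cont.aestronglyMeasurable.stronglyMeasurableAtFilter hψ₂cont.continuousAt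
  have hφd : ∀ t, HasDerivAt φ (φ' t) t := by
    intro t
    have h1 : HasDerivAt (fun u : ℝ => ∫ s in (0:ℝ)..(u+1), ψ₂ s) (ψ₂ (t+1)) t := by
      have h := (hG2 (t+1)).comp t ((hasDerivAt_id t).add_const 1)
      rw [mul_one] at h
      exact h
    have h2 := h1.sub (hG2 t)
    have heq : (fun u : ℝ => (∫ s in (0:ℝ)..(u+1), ψ₂ s) - ∫ s in (0:ℝ)..u, ψ₂ s) = φ :=
      funext fun u => (hφeq u).symm
    rw [← heq]
    exact h2
  have hφge : ∀ t, ψ₂ t ≤ φ t := by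
    intro t
    have h := intervalIntegral.integral_mono_on (a := t) (b := t+1) (by linarith)
      (intervalIntegrable_const (c := ψ₂ t)) (hψ₂Int t (t+1)) (fun s hs => hψ₂mono hs.1)
    simpa [intervalIntegral.integral_const, add_sub_cancel_left] using h
  refine ⟨dbar, hdbarc, ?_, ?_, hint, φ, φ', ?_, ?_, ?_, ?_⟩
  · intro t ht
    simp only [hdbardef]
    have := hμpos t ht; linarith
  · intro t ht
    have h1 := hd1 t ht
    have h2 := hμle1 t ht
    simp only [hdbardef]; linarith
  · intro t _
    linarith [hφge t, hψ₂ge t, hψ1 t]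
  · exact ((hψ₂cont.comp (continuous_id.add continuous_const)).sub hψ₂cont).continuousOn
  · intro t _
    exact (hφd t).hasDerivWithinAt
  · intro t ht q hq x hx e he hge y hy
    have hmem := (hψmem t).2 t ⟨ht, le_max_left t t₀⟩ q hq x hx e he hge y hy
    have hψφ : ψ t ≤ φ t := le_trans (hψ₂ge t) (hφge t)
    have hk0 : (0:ℝ) ≤ eunorm ((H t).mulVec e) ^ 2 := sq_nonneg _
    nlinarith [mul_le_mul_of_nonneg_right hψφ hk0]
end

section
/- Let a ≤ b be reals, c₂ > 0, K ≥ 1. Let V ∈ C¹([a,b];ℝ), let g : [a,b] → ℝ be continuous with g(t) ≤ 1 for all t, and let d̄ : [a,b] → ℝ be continuous with ∫_{t₁}^{t₂} d̄(s)ds > −2c₂ for all a ≤ t₁ ≤ t₂ ≤ b. Assume V(a) ≤ K and that for every t ∈ [a,b], if V(t) ≥ g(t) then V′(t) ≤ −2 d̄(t) V(t). Then V(t) < K·e^{4c₂} for all t ∈ [a,b]. -/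
open Set intervalIntegral MeasureTheory

set_option maxHeartbeats 1000000 in
/-- Grönwall-type lemma: if `V' ≤ -2 d V` on the interior of `[a,b]`, then
`V b ≤ V a * exp(-(2 ∫_a^b d))`. -/
lemma stmt6_key (a b : ℝ) (hab : a ≤ b) (V V' d : ℝ → ℝ)
    (hVd : ∀ t ∈ Set.Icc a b, HasDerivWithinAt V (V' t) (Set.Icc a b) t)
    (hdc : ContinuousOn d (Set.Icc a b))
    (hVle : ∀ t ∈ Set.Ioo a b, V' t ≤ -2 * d t * V t) :
    V b ≤ V a * Real.exp (-(2 * ∫ s in a..b, d s)) := by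
  have hdintOn : IntegrableOn d (Set.uIcc a b) := by
    rw [uIcc_of_le hab]
    exact hdc.integrableOn_Icc
  set I : ℝ → ℝ := fun s => ∫ x in a..s, d x with hIdef
  set W : ℝ → ℝ := fun s => V s * Real.exp (2 * I s) with hWdef
  have hIcont : ContinuousOn I (Set.Icc a b) := by
    have := continuousOn_primitive_interval (f := d) (a := a) (b := b)
      (μ := MeasureTheory.volume) hdintOn
    rwa [uIcc_of_le hab] at this
  have hIderiv : ∀ s ∈ Set.Ioo a b, HasDerivAt I (d s) s := by
    intro s hs
    have hsm : Set.Icc a b ∈ nhds s := Icc_mem_nhds hs.1 hs.2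
    have hcont : ContinuousAt d s := (hdc s ⟨hs.1.le, hs.2.le⟩).continuousAt hsm
    have hint : IntervalIntegrable d MeasureTheory.volume a s :=
      (hdc.mono (by rw [uIcc_of_le hs.1.le]; exact Icc_subset_Icc le_rfl hs.2.le)).intervalIntegrable
    exact integral_hasDerivAt_right hint
      ⟨Set.Icc a b, hsm, hdc.aestronglyMeasurable measurableSet_Icc⟩ hcont
  have hWderiv : ∀ s ∈ Set.Ioo a b,
      HasDerivAt W (V' s * Real.exp (2 * I s) + V s * (Real.exp (2 * I s) * (2 * d s))) s := by
    intro s hs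
    have hVat : HasDerivAt V (V' s) s :=
      (hVd s ⟨hs.1.le, hs.2.le⟩).hasDerivAt (Icc_mem_nhds hs.1 hs.2)
    have hE : HasDerivAt (fun u => Real.exp (2 * I u)) (Real.exp (2 * I s) * (2 * d s)) s :=
      HasDerivAt.exp ((hIderiv s hs).const_mul 2)
    exact hVat.mul hE
  have hVcont : ContinuousOn V (Set.Icc a b) := fun t ht => (hVd t ht).continuousWithinAt
  have hWcont : ContinuousOn W (Set.Icc a b) :=
    hVcont.mul ((continuousOn_const.mul hIcont).rexp)
  have hWanti : AntitoneOn W (Set.Icc a b) := by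
    apply antitoneOn_of_deriv_nonpos (convex_Icc a b) hWcont
    · rw [interior_Icc]
      exact fun s hs => (hWderiv s hs).differentiableAt.differentiableWithinAt
    · rw [interior_Icc]
      intro s hs
      rw [(hWderiv s hs).deriv]
      have h1 := hVle s hs
      have h2 := Real.exp_pos (2 * I s)
      nlinarith
  have hWba : W b ≤ W a := hWanti ⟨le_rfl, hab⟩ ⟨hab, le_rfl⟩ hab
  have hIa : I a = 0 := integral_same
  have hWa : W a = V a := by simp [hWdef, hIa]
  rw [hWa] at hWba
  have hE := Real.exp_pos (2 * I b)
  have : V b * Real.exp (2 * I b) ≤ V a := hWba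
  calc V b = V b * Real.exp (2 * I b) * Real.exp (-(2 * I b)) := by
        rw [mul_assoc, ← Real.exp_add]; simp
    _ ≤ V a * Real.exp (-(2 * I b)) := by
        have := Real.exp_pos (-(2 * I b))
        nlinarith

/-- Let `a ≤ b`, `c₂ > 0`, `K ≥ 1`. Let `V ∈ C¹([a,b];ℝ)` with derivative `V'`,
let `g : [a,b] → ℝ` be continuous with `g(t) ≤ 1`, and let `d̄ : [a,b] → ℝ` be continuous with
`∫_{t₁}^{t₂} d̄(s)ds > −2c₂` for all `a ≤ t₁ ≤ t₂ ≤ b`. Assume `V(a) ≤ K` and that for every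
`t ∈ [a,b]`, if `V(t) ≥ g(t)` then `V′(t) ≤ −2 d̄(t) V(t)`. Then `V(t) < K·e^{4c₂}` on `[a,b]`. -/
theorem stmt6 (a b c₂ K : ℝ) (hab : a ≤ b) (hc₂ : 0 < c₂) (hK : 1 ≤ K)
    (V V' g d : ℝ → ℝ)
    (hV'c : ContinuousOn V' (Set.Icc a b))
    (hVd : ∀ t ∈ Set.Icc a b, HasDerivWithinAt V (V' t) (Set.Icc a b) t)
    (hgc : ContinuousOn g (Set.Icc a b))
    (hg1 : ∀ t ∈ Set.Icc a b, g t ≤ 1)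
    (hdc : ContinuousOn d (Set.Icc a b))
    (hdint : ∀ t₁ t₂, a ≤ t₁ → t₁ ≤ t₂ → t₂ ≤ b → -(2 * c₂) < ∫ s in t₁..t₂, d s)
    (hVa : V a ≤ K)
    (hcond : ∀ t ∈ Set.Icc a b, g t ≤ V t → V' t ≤ -2 * d t * V t) :
    ∀ t ∈ Set.Icc a b, V t < K * Real.exp (4 * c₂) := by
  intro t ht
  have hexp1 : (1 : ℝ) < Real.exp (4 * c₂) := by
    rw [← Real.exp_zero]
    exact Real.exp_lt_exp.mpr (by linarith)
  have hKpos : (0 : ℝ) < K := lt_of_lt_of_le one_pos hK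
  by_cases hVt : V t ≤ 1
  · calc V t ≤ 1 := hVt
      _ ≤ K := hK
      _ = K * 1 := (mul_one K).symm
      _ < K * Real.exp (4 * c₂) := by nlinarith
  push_neg at hVt
  -- general sub-lemma: apply Grönwall on [t₀, t]
  have gron : ∀ t₀, a ≤ t₀ → t₀ ≤ t → (∀ s ∈ Set.Ioo t₀ t, 1 < V s) →
      V t ≤ V t₀ * Real.exp (-(2 * ∫ s in t₀..t, d s)) := by
    intro t₀ h1 h2 hbig
    have hsub : Set.Icc t₀ t ⊆ Set.Icc a b := Icc_subset_Icc h1 ht.2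
    refine stmt6_key t₀ t h2 V V' d
      (fun s hs => ((hVd s (hsub hs)).mono hsub)) (hdc.mono hsub) ?_
    intro s hs
    have hsab : s ∈ Set.Icc a b := hsub ⟨hs.1.le, hs.2.le⟩
    exact hcond s hsab (le_trans (hg1 s hsab) (hbig s hs).le)
  have hexpint : ∀ t₀, a ≤ t₀ → t₀ ≤ t →
      Real.exp (-(2 * ∫ s in t₀..t, d s)) < Real.exp (4 * c₂) := by
    intro t₀ h1 h2
    have := hdint t₀ t h1 h2 ht.2
    exact Real.exp_lt_exp.mpr (by linarith)
  by_cases hS : ∃ s ∈ Set.Icc a t, V s ≤ 1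
  · -- take the last time V ≤ 1
    set S : Set ℝ := Set.Icc a t ∩ V ⁻¹' Set.Iic 1 with hSdef
    have hScl : IsClosed S := by
      have hVcont : ContinuousOn V (Set.Icc a b) := fun s hs => (hVd s hs).continuousWithinAt
      apply ContinuousOn.preimage_isClosed_of_isClosed
        (hVcont.mono (Icc_subset_Icc le_rfl ht.2))
        isClosed_Icc isClosed_Iic
    have hSne : S.Nonempty := by
      obtain ⟨s, hs1, hs2⟩ := hS
      exact ⟨s, hs1, hs2⟩
    have hSbdd : BddAbove S := ⟨t, fun s hs => hs.1.2⟩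
    set t₀ := sSup S with ht₀def
    have ht₀mem : t₀ ∈ S := hScl.csSup_mem hSne hSbdd
    have ht₀1 : V t₀ ≤ 1 := ht₀mem.2
    have hbig : ∀ s ∈ Set.Ioo t₀ t, 1 < V s := by
      intro s hs
      by_contra h
      push_neg at h
      have : s ∈ S := ⟨⟨le_trans ht₀mem.1.1 hs.1.le, hs.2.le⟩, h⟩
      exact absurd (le_csSup hSbdd this) (not_le.mpr hs.1)
    have hVtle := gron t₀ ht₀mem.1.1 ht₀mem.1.2 hbig
    have hEpos := Real.exp_pos (-(2 * ∫ s in t₀..t, d s))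
    have hElt := hexpint t₀ ht₀mem.1.1 ht₀mem.1.2
    calc V t ≤ V t₀ * Real.exp (-(2 * ∫ s in t₀..t, d s)) := hVtle
      _ ≤ 1 * Real.exp (-(2 * ∫ s in t₀..t, d s)) := by nlinarith
      _ < 1 * Real.exp (4 * c₂) := by nlinarith
      _ ≤ K * Real.exp (4 * c₂) := by nlinarith
  · push_neg at hS
    have hbig : ∀ s ∈ Set.Ioo a t, 1 < V s := fun s hs => hS s ⟨hs.1.le, hs.2.le⟩
    have hVtle := gron a le_rfl ht.1 hbig
    have hEpos := Real.exp_pos (-(2 * ∫ s in a..t, d s))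
    have hElt := hexpint a le_rfl ht.1
    calc V t ≤ V a * Real.exp (-(2 * ∫ s in a..t, d s)) := hVtle
      _ ≤ K * Real.exp (-(2 * ∫ s in a..t, d s)) := by nlinarith
      _ < K * Real.exp (4 * c₂) := by nlinarith
end

section
/- Let a ∈ ℝ and c₁ ≥ 1/2. Let g ∈ C¹([a,∞);ℝ) satisfy g(t) > 0 and g′(t) ≥ −g(t) for all t ≥ a, and let V ∈ C¹([a,∞);ℝ) satisfy: for every t ≥ a, if V(t) ≥ g(t) then V′(t) ≤ −2c₁ V(t). If V(t̄) ≤ g(t̄) for some t̄ ≥ a, then V(t) ≤ g(t) for all t ≥ t̄. -/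
/-- Let `a ∈ ℝ` and `c₁ ≥ 1/2`. Let `g ∈ C¹([a,∞);ℝ)` satisfy `g(t) > 0` and
`g′(t) ≥ −g(t)` for all `t ≥ a`, and let `V ∈ C¹([a,∞);ℝ)` satisfy: for every `t ≥ a`, if
`V(t) ≥ g(t)` then `V′(t) ≤ −2c₁ V(t)`. If `V(t̄) ≤ g(t̄)` for some `t̄ ≥ a`, then
`V(t) ≤ g(t)` for all `t ≥ t̄`. -/
theorem stmt7 (a c₁ : ℝ) (hc₁ : 1 / 2 ≤ c₁)
    (g g' V V' : ℝ → ℝ)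
    (hg'c : ContinuousOn g' (Set.Ici a))
    (hgd : ∀ t, a ≤ t → HasDerivWithinAt g (g' t) (Set.Ici a) t)
    (hV'c : ContinuousOn V' (Set.Ici a))
    (hVd : ∀ t, a ≤ t → HasDerivWithinAt V (V' t) (Set.Ici a) t)
    (hgpos : ∀ t, a ≤ t → 0 < g t)
    (hg'low : ∀ t, a ≤ t → -g t ≤ g' t)
    (hcond : ∀ t, a ≤ t → g t ≤ V t → V' t ≤ -2 * c₁ * V t) :
    ∀ tbar, a ≤ tbar → V tbar ≤ g tbar → ∀ t, tbar ≤ t → V t ≤ g t := by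
  intro tbar htbar hV0 t ht
  have hVcont : ContinuousOn V (Set.Ici a) := fun x hx => (hVd x hx).continuousWithinAt
  have hgcont : ContinuousOn g (Set.Ici a) := fun x hx => (hgd x hx).continuousWithinAt
  -- It suffices to show V t ≤ g t + ε * exp t for all ε > 0
  have key : ∀ ε : ℝ, 0 < ε → V t ≤ g t + ε * Real.exp t := by
    intro ε hε
    have main : ∀ ⦃x⦄, x ∈ Set.Icc tbar t → V x ≤ g x + ε * Real.exp x := by
      refine image_le_of_deriv_right_lt_deriv_boundary'
        (f := V) (f' := V') (B := fun x => g x + ε * Real.exp x)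
        (B' := fun x => g' x + ε * Real.exp x)
        (hVcont.mono ?_) ?_ ?_ ?_ ?_ ?_
      · intro x hx; exact le_trans htbar hx.1
      · intro x hx
        exact (hVd x (le_trans htbar hx.1)).mono (Set.Ici_subset_Ici.2 (le_trans htbar hx.1))
      · show V tbar ≤ g tbar + ε * Real.exp tbar
        nlinarith [Real.exp_pos tbar, hε.le]
      · refine ContinuousOn.add (hgcont.mono ?_) (Continuous.continuousOn (by continuity))
        intro x hx; exact le_trans htbar hx.1
      · intro x hx
        exact ((hgd x (le_trans htbar hx.1)).mono (Set.Ici_subset_Ici.2 (le_trans htbar hx.1))).add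
          (((Real.hasDerivAt_exp x).const_mul ε).hasDerivWithinAt)
      · intro x hx heq
        show V' x < g' x + ε * Real.exp x
        have hax : a ≤ x := le_trans htbar hx.1
        have hexp : 0 < ε * Real.exp x := mul_pos hε (Real.exp_pos x)
        have hgx : 0 < g x := hgpos x hax
        have hgeV : g x ≤ V x := by rw [heq]; linarith
        have hV' : V' x ≤ -2 * c₁ * V x := hcond x hax hgeV
        have hVpos : 0 < V x := lt_of_lt_of_le hgx hgeV
        have h1 : V' x ≤ -V x := by nlinarith
        have h2 : -g x ≤ g' x := hg'low x hax
        rw [heq] at h1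
        linarith
    have h := main (Set.right_mem_Icc.2 ht)
    simpa using h
  -- take ε → 0
  by_contra hlt
  push_neg at hlt
  have hexp : 0 < Real.exp t := Real.exp_pos t
  set ε := (V t - g t) / (2 * Real.exp t) with hεdef
  have hεpos : 0 < ε := div_pos (by linarith) (by linarith)
  have := key ε hεpos
  have : V t ≤ g t + (V t - g t) / 2 := by
    have hcalc : ε * Real.exp t = (V t - g t) / 2 := by
      rw [hεdef]; field_simp
    linarith [hcalc ▸ this]
  linarith
end

section
/- Let t₀ ≥ 0 and c₁, c₂ > 0, and let d ∈ C⁰([t₀,∞);ℝ) satisfy d(t) > c₁ for all t ≥ t₀ + 1 and ∫_{t₁}^{t₂} d(s)ds > −c₂ for all t₂ ≥ t₁ ≥ t₀. Then there exists d̄ ∈ C⁰([t₀,∞);ℝ) such that: d̄(t) < d(t) for all t ≥ t₀; d̄(t) ≥ c₁ for all t ≥ t₀ + 1; and ∫_{t₁}^{t₂} d̄(s)ds > −2c₂ for all t₂ ≥ t₁ ≥ t₀. -/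
/-- Let `t₀ ≥ 0` and `c₁, c₂ > 0`, and let `d ∈ C⁰([t₀,∞);ℝ)` satisfy
`d(t) > c₁` for all `t ≥ t₀ + 1` and `∫_{t₁}^{t₂} d(s)ds > −c₂` for all `t₂ ≥ t₁ ≥ t₀`.
Then there exists `d̄ ∈ C⁰([t₀,∞);ℝ)` such that `d̄(t) < d(t)` for all `t ≥ t₀`;
`d̄(t) ≥ c₁` for all `t ≥ t₀ + 1`; and `∫_{t₁}^{t₂} d̄(s)ds > −2c₂` for all `t₂ ≥ t₁ ≥ t₀`. -/
theorem stmt8 (t₀ c₁ c₂ : ℝ) (ht₀ : 0 ≤ t₀) (hc₁ : 0 < c₁) (hc₂ : 0 < c₂)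
    (d : ℝ → ℝ) (hdc : ContinuousOn d (Set.Ici t₀))
    (hd1 : ∀ t, t₀ + 1 ≤ t → c₁ < d t)
    (hdint : ∀ t₁ t₂, t₀ ≤ t₁ → t₁ ≤ t₂ → -c₂ < ∫ s in t₁..t₂, d s) :
    ∃ dbar : ℝ → ℝ, ContinuousOn dbar (Set.Ici t₀) ∧
      (∀ t, t₀ ≤ t → dbar t < d t) ∧
      (∀ t, t₀ + 1 ≤ t → c₁ ≤ dbar t) ∧
      (∀ t₁ t₂, t₀ ≤ t₁ → t₁ ≤ t₂ → -(2 * c₂) < ∫ s in t₁..t₂, dbar s) := by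
  -- bound on |d| on the compact interval [t₀, t₀+1]
  obtain ⟨C, hC⟩ := (isCompact_Icc (a := t₀) (b := t₀ + 1)).exists_bound_of_continuousOn
    (hdc.mono Set.Icc_subset_Ici_self)
  set K : ℝ := c₁ + max C 0 + 1 with hKdef
  have hK : 0 < K := by positivity
  set l : ℝ := min (1/2) (c₂ / (2 * K)) with hldef
  have hl0 : 0 < l := lt_min (by norm_num) (by positivity)
  have hl2 : l ≤ 1/2 := min_le_left _ _
  have hlK : l * K ≤ c₂ / 2 := by
    have h1 : l ≤ c₂ / (2 * K) := min_le_right _ _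
    have := mul_le_mul_of_nonneg_right h1 hK.le
    calc l * K ≤ c₂ / (2 * K) * K := this
      _ = c₂ / 2 := by field_simp
  set ρ : ℝ → ℝ := fun t => max 0 (min 1 (t₀ + 1 - t)) with hρdef
  have hρc : Continuous ρ := by
    apply continuous_const.max
    exact continuous_const.min (continuous_const.sub continuous_id)
  have hρ0 : ∀ t, t₀ + 1 ≤ t → ρ t = 0 := by
    intro t ht
    have : min 1 (t₀ + 1 - t) ≤ 0 := le_trans (min_le_right _ _) (by linarith)
    simp [hρdef, max_eq_left this]
  have hρ1 : ∀ t, ρ t ≤ 1 := fun t => max_le (by norm_num) (min_le_left _ _)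
  have hρnn : ∀ t, 0 ≤ ρ t := fun t => le_max_left _ _
  refine ⟨fun t => min (d t - (c₂/2) * ρ t) (l * c₁ + (1 - l) * d t), ?_, ?_, ?_, ?_⟩
  · -- continuity
    exact ContinuousOn.inf (hdc.sub ((continuous_const.mul hρc).continuousOn))
      (continuousOn_const.add (continuousOn_const.mul hdc))
  · -- dbar < d
    intro t ht
    rcases le_or_gt (t₀ + 1) t with h | h
    · have hd := hd1 t h
      calc min (d t - (c₂/2) * ρ t) (l * c₁ + (1 - l) * d t) ≤ l * c₁ + (1 - l) * d t :=
            min_le_right _ _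
        _ < d t := by nlinarith
    · have hρpos : 0 < ρ t := by
        have h1 : (0:ℝ) < min 1 (t₀ + 1 - t) := lt_min (by norm_num) (by linarith)
        exact lt_of_lt_of_le h1 (le_max_right _ _)
      calc min (d t - (c₂/2) * ρ t) (l * c₁ + (1 - l) * d t) ≤ d t - (c₂/2) * ρ t :=
            min_le_left _ _
        _ < d t := by nlinarith
  · -- dbar ≥ c₁ for t ≥ t₀ + 1
    intro t ht
    have hd := hd1 t ht
    have h0 := hρ0 t ht
    apply le_min
    · rw [h0]; nlinarith
    · nlinarith
  · -- integral bound
    intro t₁ t₂ ht₁ h12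
    have ht₂ : t₀ ≤ t₂ := le_trans ht₁ h12
    set b : ℝ → ℝ := fun s => l * c₁ + (1 - l) * d s with hbdef
    set ψ : ℝ → ℝ := fun s => l * max 0 (c₁ - d s) + (c₂/2) * ρ s with hψdef
    have hψc : ContinuousOn ψ (Set.Ici t₀) :=
      (continuousOn_const.mul (ContinuousOn.sup continuousOn_const (continuousOn_const.sub hdc))).add
        ((continuous_const.mul hρc).continuousOn)
    have hψnn : ∀ s, 0 ≤ ψ s := by
      intro s
      have h1 : (0:ℝ) ≤ max 0 (c₁ - d s) := le_max_left _ _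
      have h2 := hρnn s
      simp only [hψdef]
      nlinarith
    have hψ0 : ∀ s, t₀ + 1 ≤ s → ψ s = 0 := by
      intro s hs
      have hd := hd1 s hs
      have h1 : max 0 (c₁ - d s) = 0 := max_eq_left (by linarith)
      simp [hψdef, h1, hρ0 s hs]
    -- integrability helpers
    have hint : ∀ f : ℝ → ℝ, ContinuousOn f (Set.Ici t₀) → ∀ a b : ℝ, t₀ ≤ a → t₀ ≤ b →
        IntervalIntegrable f MeasureTheory.volume a b := by
      intro f hf a b ha hb
      apply ContinuousOn.intervalIntegrable
      apply hf.mono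
      intro x hx
      rcases le_total a b with h | h
      · rw [Set.uIcc_of_le h] at hx; exact le_trans ha hx.1
      · rw [Set.uIcc_of_ge h] at hx; exact le_trans hb hx.1
    have hdbarc : ContinuousOn (fun t => min (d t - (c₂/2) * ρ t) (l * c₁ + (1 - l) * d t))
        (Set.Ici t₀) :=
      ContinuousOn.inf (hdc.sub ((continuous_const.mul hρc).continuousOn))
        (continuousOn_const.add (continuousOn_const.mul hdc))
    have hid := hint d hdc t₁ t₂ ht₁ ht₂
    have hib := hint b (continuousOn_const.add (continuousOn_const.mul hdc)) t₁ t₂ ht₁ ht₂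
    have hiψ := hint ψ hψc t₁ t₂ ht₁ ht₂
    have hidbar := hint _ hdbarc t₁ t₂ ht₁ ht₂
    -- pointwise: b - ψ ≤ dbar
    have hpt : ∀ s, b s - ψ s ≤ min (d s - (c₂/2) * ρ s) (l * c₁ + (1 - l) * d s) := by
      intro s
      apply le_min
      · have h1 : c₁ - d s ≤ max 0 (c₁ - d s) := le_max_right _ _
        have h2 := hρnn s
        simp only [hbdef, hψdef]
        nlinarith
      · have := hψnn s
        simp only [hbdef] at *
        linarith
    -- ∫ b
    have hbint : ∫ s in t₁..t₂, b s = (t₂ - t₁) * (l * c₁) + (1 - l) * ∫ s in t₁..t₂, d s := by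
      simp only [hbdef]
      rw [intervalIntegral.integral_add intervalIntegrable_const (hid.const_mul _),
        intervalIntegral.integral_const, intervalIntegral.integral_const_mul, smul_eq_mul]
    have hbgt : -c₂ < ∫ s in t₁..t₂, b s := by
      have h1 := hdint t₁ t₂ ht₁ h12
      have h2 : (1 - l) * (-c₂) < (1 - l) * ∫ s in t₁..t₂, d s := by
        apply mul_lt_mul_of_pos_left h1; linarith
      have h3 : 0 ≤ (t₂ - t₁) * (l * c₁) := by
        apply mul_nonneg (by linarith) (by positivity)
      rw [hbint]; nlinarith
    -- ∫ ψ ≤ c₂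
    set u : ℝ := max t₁ (min t₂ (t₀ + 1)) with hudef
    have hu1 : t₁ ≤ u := le_max_left _ _
    have hu2 : u ≤ t₂ := max_le h12 (min_le_left _ _)
    have hut : u ≤ t₁ + 1 := max_le (by linarith) (le_trans (min_le_right _ _) (by linarith))
    have ht₀u : t₀ ≤ u := le_trans ht₁ hu1
    have hiψ1 := hint ψ hψc t₁ u ht₁ ht₀u
    have hiψ2 := hint ψ hψc u t₂ ht₀u ht₂
    have hsplit : ∫ s in t₁..t₂, ψ s = (∫ s in t₁..u, ψ s) + ∫ s in u..t₂, ψ s :=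
      (intervalIntegral.integral_add_adjacent_intervals hiψ1 hiψ2).symm
    have hzero : ∫ s in u..t₂, ψ s = 0 := by
      rcases le_or_gt t₂ (t₀ + 1) with h | h
      · have hu : u = t₂ := by
          rw [hudef, min_eq_left h, max_eq_right h12]
        rw [hu, intervalIntegral.integral_same]
      · have hu' : t₀ + 1 ≤ u := by
          rw [hudef]
          exact le_max_of_le_right (le_min h.le (le_refl _))
        have : Set.EqOn ψ (fun _ => (0:ℝ)) (Set.uIcc u t₂) := by
          intro s hs
          rw [Set.uIcc_of_le hu2] at hs
          exact hψ0 s (le_trans hu' hs.1)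
        rw [intervalIntegral.integral_congr this]
        simp
    have hψle : ∀ s ∈ Set.Icc t₁ u, ψ s ≤ c₂ := by
      intro s hs
      rcases le_or_gt s (t₀ + 1) with h | h
      · have hs0 : t₀ ≤ s := le_trans ht₁ hs.1
        have hCs := hC s ⟨hs0, h⟩
        rw [Real.norm_eq_abs] at hCs
        have hds : -(max C 0) ≤ d s := by
          have h1 : -C ≤ d s := neg_le_of_abs_le hCs
          have h2 : C ≤ max C 0 := le_max_left _ _
          linarith
        have h1 : max 0 (c₁ - d s) ≤ c₁ + max C 0 := by
          apply max_le
          · positivity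
          · linarith
        have h2 : l * max 0 (c₁ - d s) ≤ l * (c₁ + max C 0) :=
          mul_le_mul_of_nonneg_left h1 hl0.le
        have h3 : l * (c₁ + max C 0) ≤ c₂ / 2 := by
          have : l * (c₁ + max C 0) ≤ l * K := by
            apply mul_le_mul_of_nonneg_left _ hl0.le
            rw [hKdef]; linarith
          linarith
        have h4 : (c₂/2) * ρ s ≤ c₂/2 := by
          have := hρ1 s
          nlinarith
        simp only [hψdef]
        linarith
      · rw [hψ0 s h.le]; linarith
    have hψint : ∫ s in t₁..t₂, ψ s ≤ c₂ := by
      rw [hsplit, hzero, add_zero]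
      calc ∫ s in t₁..u, ψ s ≤ ∫ _ in t₁..u, c₂ :=
            intervalIntegral.integral_mono_on hu1 hiψ1 intervalIntegrable_const hψle
        _ = (u - t₁) * c₂ := by rw [intervalIntegral.integral_const, smul_eq_mul]
        _ ≤ c₂ := by nlinarith
    -- combine
    have hmono : (∫ s in t₁..t₂, b s) - (∫ s in t₁..t₂, ψ s)
        ≤ ∫ s in t₁..t₂, min (d s - (c₂/2) * ρ s) (l * c₁ + (1 - l) * d s) := by
      rw [← intervalIntegral.integral_sub hib hiψ]
      apply intervalIntegral.integral_mono_on h12 (hib.sub hiψ) hidbar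
      intro s _
      exact hpt s
    linarith
end

section
/- Let m ≥ 3 be an odd integer and define b : ℝ² → ℝ by b(α, β) := Σ_{j=0}^{m−1} α^j (α−β)^{m−1−j}. Then there exists ϑ > 0 such that b(α, β) ≥ ϑ·(α² + β²)^{(m−1)/2} for all (α, β) ∈ ℝ²; in particular b(α, β) − ϑ·β^{m−1} ≥ 0 for all (α, β) ∈ ℝ². -/
/-- The polynomial `b(α,β) = Σ_{j=0}^{m−1} α^j (α−β)^{m−1−j}` appearing in the factorization
`x^m − z^m = b(x, x−z)·(x−z)`. -/
noncomputable def bpoly (m : ℕ) (α β : ℝ) : ℝ :=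
  ∑ j ∈ Finset.range m, α ^ j * (α - β) ^ (m - 1 - j)

lemma bpoly_mul (m : ℕ) (α β : ℝ) : bpoly m α β * β = α ^ m - (α - β) ^ m := by
  have := geom_sum₂_mul α (α - β) m
  simpa [bpoly] using this

lemma bpoly_pos (m : ℕ) (hm3 : 3 ≤ m) (hmodd : Odd m) (α β : ℝ)
    (h : α ^ 2 + β ^ 2 = 1) : 0 < bpoly m α β := by
  rcases eq_or_ne β 0 with hb | hb
  · subst hb
    have hα2 : α ^ 2 = 1 := by linarith
    have hsum : bpoly m α 0 = (m : ℝ) * α ^ (m - 1) := by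
      unfold bpoly
      rw [Finset.sum_congr rfl (fun j hj => ?_), Finset.sum_const, Finset.card_range,
        nsmul_eq_mul]
      rw [Finset.mem_range] at hj
      rw [sub_zero, ← pow_add]
      congr 1
      omega
    rw [hsum]
    have : α ^ (m - 1) = (α ^ 2) ^ ((m - 1) / 2) := by
      rw [← pow_mul]
      congr 1
      obtain ⟨k, hk⟩ := hmodd
      omega
    rw [this, hα2, one_pow, mul_one]
    positivity
  · have key := bpoly_mul m α β
    rcases lt_or_gt_of_ne hb with hneg | hpos
    · have hlt : α ^ m < (α - β) ^ m := hmodd.strictMono_pow (by linarith)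
      have : bpoly m α β = (α ^ m - (α - β) ^ m) / β := by
        field_simp [← key]
        exact key
      rw [this]
      exact div_pos_of_neg_of_neg (by linarith) hneg
    · have hlt : (α - β) ^ m < α ^ m := hmodd.strictMono_pow (by linarith)
      have : bpoly m α β = (α ^ m - (α - β) ^ m) / β := by
        field_simp [← key]
        exact key
      rw [this]
      exact div_pos (by linarith) hpos

lemma bpoly_homog (m : ℕ) (t α β : ℝ) :
    bpoly m (t * α) (t * β) = t ^ (m - 1) * bpoly m α β := by
  unfold bpoly
  rw [Finset.mul_sum]
  refine Finset.sum_congr rfl fun j hj => ?_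
  rw [Finset.mem_range] at hj
  have : t * α - t * β = t * (α - β) := by ring
  rw [this, mul_pow, mul_pow]
  have hexp : j + (m - 1 - j) = m - 1 := by omega
  calc t ^ j * α ^ j * (t ^ (m - 1 - j) * (α - β) ^ (m - 1 - j))
      = t ^ (j + (m - 1 - j)) * (α ^ j * (α - β) ^ (m - 1 - j)) := by
        rw [pow_add]; ring
    _ = t ^ (m - 1) * (α ^ j * (α - β) ^ (m - 1 - j)) := by rw [hexp]

/-- Let `m ≥ 3` be an odd integer. Then there exists `ϑ > 0` such that
`b(α,β) ≥ ϑ·(α² + β²)^{(m−1)/2}` for all `(α,β) ∈ ℝ²`; in particular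
`b(α,β) − ϑ·β^{m−1} ≥ 0` for all `(α,β) ∈ ℝ²`. -/
theorem stmt13 (m : ℕ) (hm3 : 3 ≤ m) (hmodd : Odd m) :
    ∃ ϑ : ℝ, 0 < ϑ ∧ ∀ α β : ℝ,
      ϑ * (α ^ 2 + β ^ 2) ^ ((m - 1) / 2) ≤ bpoly m α β ∧
      0 ≤ bpoly m α β - ϑ * β ^ (m - 1) := by
  set S : Set (ℝ × ℝ) := {p | p.1 ^ 2 + p.2 ^ 2 = 1} with hS
  have hclosed : IsClosed S := isClosed_eq (by fun_prop) continuous_const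
  have hsub : S ⊆ Metric.closedBall 0 1 := by
    intro p hp
    simp only [hS, Set.mem_setOf_eq] at hp
    have h1 : p.1 ^ 2 ≤ 1 := by nlinarith [sq_nonneg p.2]
    have h2 : p.2 ^ 2 ≤ 1 := by nlinarith [sq_nonneg p.1]
    rw [Metric.mem_closedBall, dist_zero_right, Prod.norm_def]
    simp only [Real.norm_eq_abs]
    exact max_le (abs_le_one_iff_mul_self_le_one.2 (by nlinarith))
      (abs_le_one_iff_mul_self_le_one.2 (by nlinarith))
  have hcompact : IsCompact S :=
    (isCompact_closedBall (0 : ℝ × ℝ) 1).of_isClosed_subset hclosed hsub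
  have hne : S.Nonempty := ⟨(1, 0), by simp [hS]⟩
  have hcont : Continuous fun p : ℝ × ℝ => bpoly m p.1 p.2 := by
    unfold bpoly; fun_prop
  obtain ⟨p0, hp0S, hmin⟩ := hcompact.exists_isMinOn hne hcont.continuousOn
  set ϑ := bpoly m p0.1 p0.2 with hϑ
  have hϑpos : 0 < ϑ := bpoly_pos m hm3 hmodd p0.1 p0.2 hp0S
  have hk : 2 * ((m - 1) / 2) = m - 1 := by
    obtain ⟨k, hkk⟩ := hmodd; omega
  refine ⟨ϑ, hϑpos, fun α β => ?_⟩
  have hmain : ϑ * (α ^ 2 + β ^ 2) ^ ((m - 1) / 2) ≤ bpoly m α β := by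
    rcases eq_or_ne (α ^ 2 + β ^ 2) 0 with h0 | h0
    · have hα : α = 0 := by nlinarith [sq_nonneg α, sq_nonneg β]
      have hβ : β = 0 := by nlinarith [sq_nonneg α, sq_nonneg β]
      subst hα; subst hβ
      have hb0 : bpoly m (0:ℝ) 0 = 0 := by
        unfold bpoly
        refine Finset.sum_eq_zero fun j hj => ?_
        rcases Nat.eq_zero_or_pos j with hj0 | hj0
        · subst hj0
          have : ((0:ℝ) - 0) ^ (m - 1 - 0) = 0 := by
            rw [sub_zero]; apply zero_pow; omega
          rw [this, mul_zero]
        · have : (0:ℝ) ^ j = 0 := by apply zero_pow; omega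
          simp only [this, zero_mul]
      rw [hb0, h0]
      have : (0:ℝ) ^ ((m - 1) / 2) = 0 := by apply zero_pow; omega
      rw [this, mul_zero]
    · have hpos : 0 < α ^ 2 + β ^ 2 := lt_of_le_of_ne (by positivity) (Ne.symm h0)
      set r : ℝ := Real.sqrt (α ^ 2 + β ^ 2) with hr
      have hrpos : 0 < r := Real.sqrt_pos.2 hpos
      have hr2 : r ^ 2 = α ^ 2 + β ^ 2 := Real.sq_sqrt hpos.le
      have hcirc : (α / r) ^ 2 + (β / r) ^ 2 = 1 := by
        field_simp
        linarith
      have hpoint : (α / r, β / r) ∈ S := hcirc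
      have hineq : ϑ ≤ bpoly m (α / r) (β / r) := hmin hpoint
      have hhom : bpoly m α β = r ^ (m - 1) * bpoly m (α / r) (β / r) := by
        have := bpoly_homog m r (α / r) (β / r)
        rw [mul_div_cancel₀ _ hrpos.ne', mul_div_cancel₀ _ hrpos.ne'] at this
        exact this
      have hrpow : r ^ (m - 1) = (α ^ 2 + β ^ 2) ^ ((m - 1) / 2) := by
        rw [← hr2, ← pow_mul, hk]
      calc ϑ * (α ^ 2 + β ^ 2) ^ ((m - 1) / 2)
          = (α ^ 2 + β ^ 2) ^ ((m - 1) / 2) * ϑ := by ring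
        _ ≤ (α ^ 2 + β ^ 2) ^ ((m - 1) / 2) * bpoly m (α / r) (β / r) := by
            apply mul_le_mul_of_nonneg_left hineq; positivity
        _ = bpoly m α β := by rw [hhom, hrpow]
  refine ⟨hmain, ?_⟩
  have hβpow : β ^ (m - 1) = (β ^ 2) ^ ((m - 1) / 2) := by
    rw [← pow_mul, hk]
  have hle : ϑ * β ^ (m - 1) ≤ ϑ * (α ^ 2 + β ^ 2) ^ ((m - 1) / 2) := by
    apply mul_le_mul_of_nonneg_left _ hϑpos.le
    rw [hβpow]
    apply pow_le_pow_left₀ (by positivity)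
    nlinarith [sq_nonneg α]
  linarith
end

section
/- Let m be an odd positive integer and define b : ℝ² → ℝ by b(α, β) := Σ_{j=0}^{m−1} α^j (α−β)^{m−1−j}. Then: (i) b(α, β) > 0 for every (α, β) ∈ ℝ² with (α, β) ≠ (0, 0); and (ii) b is homogeneous of degree m−1, i.e. b(λα, λβ) = λ^{m−1}·b(α, β) for all λ ∈ ℝ and all (α, β) ∈ ℝ². -/
/-- Let `m` be an odd positive integer. Then:
(i) `b(α,β) > 0` for every `(α,β) ≠ (0,0)`; and
(ii) `b` is homogeneous of degree `m−1`: `b(λα, λβ) = λ^{m−1}·b(α,β)`. -/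
theorem stmt14 (m : ℕ) (hmodd : Odd m) (hmpos : 0 < m) :
    (∀ α β : ℝ, (α, β) ≠ (0, 0) → 0 < bpoly m α β) ∧
    (∀ lam α β : ℝ, bpoly m (lam * α) (lam * β) = lam ^ (m - 1) * bpoly m α β) := by
  constructor
  · intro α β hne
    rcases eq_or_ne β 0 with hb | hb
    · subst hb
      have hα : α ≠ 0 := by
        intro h; exact hne (by simp [h])
      have heval : bpoly m α 0 = (m : ℝ) * α ^ (m - 1) := by
        unfold bpoly
        rw [Finset.sum_congr rfl (fun j hj => ?_), Finset.sum_const, Finset.card_range,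
          nsmul_eq_mul]
        rw [sub_zero, ← pow_add]
        congr 1
        have := Finset.mem_range.mp hj
        omega
      rw [heval]
      have heven : Even (m - 1) := by
        rcases hmodd with ⟨k, hk⟩; exact ⟨k, by omega⟩
      have : 0 < α ^ (m - 1) := heven.pow_pos hα
      positivity
    · have key := bpoly_mul m α β
      have hmono : StrictMono fun x : ℝ => x ^ m := hmodd.strictMono_pow
      rcases lt_or_gt_of_ne hb with hb' | hb'
      · have h1 : α ^ m < (α - β) ^ m := hmono (by linarith)
        have h2 : bpoly m α β * β < 0 := by rw [key]; linarith
        rcases mul_neg_iff.mp h2 with ⟨h, _⟩ | ⟨_, h⟩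
        · exact h
        · linarith
      · have h1 : (α - β) ^ m < α ^ m := hmono (by linarith)
        have h2 : 0 < bpoly m α β * β := by rw [key]; linarith
        rcases mul_pos_iff.mp h2 with ⟨h, _⟩ | ⟨_, h⟩
        · exact h
        · linarith
  · intro lam α β
    unfold bpoly
    rw [Finset.mul_sum]
    refine Finset.sum_congr rfl fun j hj => ?_
    have hj' : j < m := Finset.mem_range.mp hj
    have : lam * α - lam * β = lam * (α - β) := by ring
    have hpow : lam ^ j * lam ^ (m - 1 - j) = lam ^ (m - 1) := by
      rw [← pow_add]; congr 1; omega
    rw [this, mul_pow, mul_pow, ← hpow]; ring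
end

section
/- Let t₀ ≥ 0 and c > 0, and let a, h ∈ C¹([t₀,∞);ℝ) with a(t) > 0 and h(t) ≥ 0 for all t ≥ t₀. Then there exist p ∈ C¹([t₀,∞);ℝ) with p(t₀) = 0 and p(t) ≤ 0 for all t ≥ t₀, and d ∈ C⁰([t₀,∞);ℝ) with d(t) = c for all t ≥ t₀ + 1 and ∫_{t₁}^{t₂} d(s)ds ≥ −1 for all t₀ ≤ t₁ ≤ t₂ ≤ t₀ + 1, such that p(t)·a(t) + h(t) ≤ −d(t) for all t ≥ t₀. -/
lemma max_pow_hasDerivAt (n : ℕ) (hn : 2 ≤ n) (x : ℝ) :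
    HasDerivAt (fun y : ℝ => max y 0 ^ n) (n * max x 0 ^ (n - 1)) x := by
  rcases lt_trichotomy x 0 with hx | hx | hx
  · have hev : (fun y : ℝ => max y 0 ^ n) =ᶠ[nhds x] fun _ => (0:ℝ) :=
      Filter.eventuallyEq_of_mem (isOpen_Iio.mem_nhds hx) (fun y (hy : y < 0) => by
        simp [max_eq_right hy.le, zero_pow (by omega : n ≠ 0)])
    have h0 : HasDerivAt (fun _ : ℝ => (0:ℝ)) 0 x := hasDerivAt_const x 0
    have := h0.congr_of_eventuallyEq hev
    refine this.congr_deriv ?_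
    simp [max_eq_right hx.le, zero_pow (by omega : n - 1 ≠ 0)]
  · subst hx
    rw [hasDerivAt_iff_isLittleO]
    simp only [max_self, zero_pow (by omega : n - 1 ≠ 0), mul_zero, zero_pow (by omega : n ≠ 0),
      sub_zero, smul_zero]
    rw [Asymptotics.isLittleO_iff]
    intro c hc
    filter_upwards [Metric.eventually_nhds_iff.2 ⟨min c 1, by positivity, fun {y} hy => hy⟩]
    intro y hy
    rw [Real.dist_eq, sub_zero] at hy
    have h1 : |y| ≤ 1 := le_of_lt (lt_of_lt_of_le hy (min_le_right _ _))
    have h2 : |y| ≤ c := le_of_lt (lt_of_lt_of_le hy (min_le_left _ _))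
    have hm : |max y 0| ≤ |y| := by
      rw [abs_of_nonneg (le_max_right y 0)]
      exact max_le (le_abs_self y) (abs_nonneg y)
    calc ‖max y 0 ^ n‖ = |max y 0| ^ n := by rw [Real.norm_eq_abs, abs_pow]
      _ ≤ |y| ^ n := by gcongr
      _ ≤ |y| ^ 2 := pow_le_pow_of_le_one (abs_nonneg y) h1 hn
      _ = |y| * |y| := by ring
      _ ≤ c * |y| := by gcongr
      _ = c * ‖y‖ := rfl
  · have hev : (fun y : ℝ => max y 0 ^ n) =ᶠ[nhds x] fun y => y ^ n :=
      Filter.eventuallyEq_of_mem (isOpen_Ioi.mem_nhds hx) (fun y (hy : 0 < y) => by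
        simp [max_eq_left hy.le])
    have := (hasDerivAt_pow n x).congr_of_eventuallyEq hev
    refine this.congr_deriv ?_
    simp [max_eq_left hx.le]

lemma inner_hasDerivAt (K t₀ : ℝ) (t : ℝ) :
    HasDerivAt (fun t : ℝ => 1 - K * (t - t₀)) (-K) t := by
  have := (((hasDerivAt_id t).sub_const t₀).const_mul K).const_sub 1
  simpa using this

lemma phi_hasDerivAt (K t₀ : ℝ) (t : ℝ) :
    HasDerivAt (fun t : ℝ => max (1 - K * (t - t₀)) 0 ^ 2)
      (2 * max (1 - K * (t - t₀)) 0 * -K) t := by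
  have := (max_pow_hasDerivAt 2 le_rfl (1 - K * (t - t₀))).comp t (inner_hasDerivAt K t₀ t)
  refine this.congr_deriv ?_
  push_cast
  ring

lemma phi_cont (K t₀ : ℝ) : Continuous (fun t : ℝ => max (1 - K * (t - t₀)) 0 ^ 2) := by
  fun_prop

lemma phi_integral (K t₀ : ℝ) (hK : 1 ≤ K) :
    ∫ s in t₀..(t₀ + 1), max (1 - K * (s - t₀)) 0 ^ 2 = 1 / (3 * K) := by
  have hK0 : (0:ℝ) < K := lt_of_lt_of_le one_pos hK
  have hF : ∀ u ∈ Set.uIcc t₀ (t₀ + 1),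
      HasDerivAt (fun u : ℝ => -(max (1 - K * (u - t₀)) 0 ^ 3 / (3 * K)))
        (max (1 - K * (u - t₀)) 0 ^ 2) u := by
    intro u _
    have h3 := (max_pow_hasDerivAt 3 (by norm_num) (1 - K * (u - t₀))).comp u
      (inner_hasDerivAt K t₀ u)
    have := (h3.div_const (3 * K)).neg
    refine this.congr_deriv ?_
    push_cast
    field_simp
  have hint := intervalIntegral.integral_eq_sub_of_hasDerivAt hF
    ((phi_cont K t₀).intervalIntegrable t₀ (t₀ + 1))
  rw [hint]
  have h1 : max (1 - K * (t₀ + 1 - t₀)) 0 = 0 := by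
    rw [max_eq_right]; nlinarith
  have h2 : max (1 - K * (t₀ - t₀)) 0 = 1 := by
    rw [sub_self, mul_zero, sub_zero, max_eq_left zero_le_one]
  rw [h1, h2]
  field_simp
  norm_num

/-- Let `t₀ ≥ 0` and `c > 0`, and let `a, h ∈ C¹([t₀,∞);ℝ)` with `a(t) > 0`
and `h(t) ≥ 0` for all `t ≥ t₀`. Then there exist `p ∈ C¹([t₀,∞);ℝ)` with `p(t₀) = 0` and
`p(t) ≤ 0` for all `t ≥ t₀`, and `d ∈ C⁰([t₀,∞);ℝ)` with `d(t) = c` for all `t ≥ t₀ + 1` and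
`∫_{t₁}^{t₂} d(s)ds ≥ −1` for all `t₀ ≤ t₁ ≤ t₂ ≤ t₀ + 1`, such that
`p(t)·a(t) + h(t) ≤ −d(t)` for all `t ≥ t₀`. -/
theorem stmt17 (t₀ c : ℝ) (ht₀ : 0 ≤ t₀) (hc : 0 < c)
    (a h a' h' : ℝ → ℝ)
    (ha'c : ContinuousOn a' (Set.Ici t₀))
    (had : ∀ t, t₀ ≤ t → HasDerivWithinAt a (a' t) (Set.Ici t₀) t)
    (hh'c : ContinuousOn h' (Set.Ici t₀))
    (hhd : ∀ t, t₀ ≤ t → HasDerivWithinAt h (h' t) (Set.Ici t₀) t)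
    (hapos : ∀ t, t₀ ≤ t → 0 < a t)
    (hh0 : ∀ t, t₀ ≤ t → 0 ≤ h t) :
    ∃ p p' d : ℝ → ℝ,
      ContinuousOn p' (Set.Ici t₀) ∧
      (∀ t, t₀ ≤ t → HasDerivWithinAt p (p' t) (Set.Ici t₀) t) ∧
      p t₀ = 0 ∧ (∀ t, t₀ ≤ t → p t ≤ 0) ∧
      ContinuousOn d (Set.Ici t₀) ∧
      (∀ t, t₀ + 1 ≤ t → d t = c) ∧
      (∀ t₁ t₂, t₀ ≤ t₁ → t₁ ≤ t₂ → t₂ ≤ t₀ + 1 → -1 ≤ ∫ s in t₁..t₂, d s) ∧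
      (∀ t, t₀ ≤ t → p t * a t + h t ≤ -(d t)) := by
  -- continuity of a and h on Ici t₀
  have hac : ContinuousOn a (Set.Ici t₀) := fun t ht => (had t ht).continuousWithinAt
  have hhc : ContinuousOn h (Set.Ici t₀) := fun t ht => (hhd t ht).continuousWithinAt
  have hane : ∀ t ∈ Set.Ici t₀, a t ≠ 0 := fun t ht => (hapos t ht).ne'
  -- bound H for h on [t₀, t₀+1]
  obtain ⟨z, hz, hzmax'⟩ := isCompact_Icc.exists_isMaxOn
    (Set.nonempty_Icc.2 (by linarith : t₀ ≤ t₀ + 1))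
    (hhc.mono (Set.Icc_subset_Ici_self))
  have hzmax : ∀ x ∈ Set.Icc t₀ (t₀ + 1), h x ≤ h z := fun x hx => hzmax' hx
  set H : ℝ := h z with hHdef
  have hH0 : 0 ≤ H := hh0 z hz.1
  set K : ℝ := H + 1 with hKdef
  have hK1 : 1 ≤ K := by linarith
  have hK0 : 0 < K := by linarith
  -- the cutoff
  set φ : ℝ → ℝ := fun t => max (1 - K * (t - t₀)) 0 ^ 2 with hφdef
  have hφ0 : ∀ t, 0 ≤ φ t := fun t => sq_nonneg _
  have hφ1 : ∀ t, t₀ ≤ t → φ t ≤ 1 := by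
    intro t ht
    have : max (1 - K * (t - t₀)) 0 ≤ 1 := by
      apply max_le _ zero_le_one
      nlinarith
    calc φ t ≤ 1 ^ 2 := by
          apply pow_le_pow_left₀ (le_max_right _ _) this
      _ = 1 := one_pow 2
  have hφt₀ : φ t₀ = 1 := by
    simp [hφdef]
  have hφzero : ∀ t, t₀ + 1 ≤ t → φ t = 0 := by
    intro t ht
    have : max (1 - K * (t - t₀)) 0 = 0 := by
      rw [max_eq_right]; nlinarith
    simp [hφdef, this]
  refine ⟨fun t => -((1 - φ t) * ((c + h t) / a t)),
    fun t => -(2 * max (1 - K * (t - t₀)) 0 * K * ((c + h t) / a t))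
      - (1 - φ t) * ((h' t * a t - (c + h t) * a' t) / a t ^ 2),
    fun t => (1 - φ t) * c - φ t * h t,
    ?_, ?_, ?_, ?_, ?_, ?_, ?_, ?_⟩
  · -- continuity of p'
    apply ContinuousOn.sub
    · exact (((continuous_const.mul ((continuous_const.sub
        (continuous_const.mul (continuous_id.sub continuous_const))).max
        continuous_const)).mul continuous_const).continuousOn.mul
        ((continuousOn_const.add hhc).div hac hane)).neg
    · exact (continuousOn_const.sub (phi_cont K t₀).continuousOn).mul
        (((hh'c.mul hac).sub ((continuousOn_const.add hhc).mul ha'c)).div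
          (hac.pow 2) (fun t ht => pow_ne_zero 2 (hane t ht)))
  · -- derivative of p
    intro t ht
    have hq : HasDerivWithinAt (fun t => (c + h t) / a t)
        ((h' t * a t - (c + h t) * a' t) / a t ^ 2) (Set.Ici t₀) t := by
      have := (((hhd t ht).const_add c).div (had t ht) (hane t ht))
      exact this
    have h2 : HasDerivWithinAt (fun t => 1 - φ t)
        (-(2 * max (1 - K * (t - t₀)) 0 * -K)) (Set.Ici t₀) t :=
      ((phi_hasDerivAt K t₀ t).hasDerivWithinAt).const_sub 1
    have h3 := (h2.mul hq).neg
    refine h3.congr_deriv ?_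
    ring
  · -- p t₀ = 0
    show -((1 - φ t₀) * ((c + h t₀) / a t₀)) = 0
    rw [hφt₀]; ring
  · -- p ≤ 0
    intro t ht
    have h1 : 0 ≤ 1 - φ t := by linarith [hφ1 t ht]
    have h2 : 0 ≤ (c + h t) / a t :=
      div_nonneg (by linarith [hh0 t ht]) (hapos t ht).le
    simpa using mul_nonneg h1 h2
  · -- continuity of d
    exact ((continuousOn_const.sub (phi_cont K t₀).continuousOn).mul continuousOn_const).sub
      ((phi_cont K t₀).continuousOn.mul hhc)
  · -- d = c for t ≥ t₀+1
    intro t ht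
    show (1 - φ t) * c - φ t * h t = c
    rw [hφzero t ht]; ring
  · -- integral bound
    intro t₁ t₂ h01 h12 h21
    set d : ℝ → ℝ := fun t => (1 - φ t) * c - φ t * h t with hddef
    have hsub : Set.Icc t₁ t₂ ⊆ Set.Icc t₀ (t₀ + 1) :=
      Set.Icc_subset_Icc h01 h21
    have hdc : ContinuousOn d (Set.Icc t₁ t₂) :=
      (((continuousOn_const.sub (phi_cont K t₀).continuousOn).mul continuousOn_const).sub
        ((phi_cont K t₀).continuousOn.mul hhc)).mono
        (hsub.trans (Set.Icc_subset_Ici_self.trans (by simp [Set.Ici_subset_Ici])))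
    have hint_d : IntervalIntegrable d MeasureTheory.volume t₁ t₂ :=
      hdc.intervalIntegrable_of_Icc h12
    have hint_φ : IntervalIntegrable (fun s => -(H * φ s)) MeasureTheory.volume t₁ t₂ :=
      (((continuous_const.mul (phi_cont K t₀)).neg)).intervalIntegrable t₁ t₂
    have hmono : ∫ s in t₁..t₂, (-(H * φ s)) ≤ ∫ s in t₁..t₂, d s := by
      apply intervalIntegral.integral_mono_on h12 hint_φ hint_d
      intro x hx
      have hx0 : t₀ ≤ x := le_trans h01 hx.1
      have hxH : h x ≤ H := hzmax x (hsub hx)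
      have h1 : 0 ≤ 1 - φ x := by linarith [hφ1 x hx0]
      have h2 : φ x * h x ≤ φ x * H := mul_le_mul_of_nonneg_left hxH (hφ0 x)
      show -(H * φ x) ≤ (1 - φ x) * c - φ x * h x
      nlinarith [hc.le]
    have hintle : ∫ s in t₁..t₂, φ s ≤ 1 / (3 * K) := by
      rw [← phi_integral K t₀ hK1]
      apply intervalIntegral.integral_mono_interval h01 h12 h21
        (Filter.Eventually.of_forall (fun x => hφ0 x))
        ((phi_cont K t₀).intervalIntegrable t₀ (t₀ + 1))
    have hcalc : ∫ s in t₁..t₂, (-(H * φ s)) = -(H * ∫ s in t₁..t₂, φ s) := by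
      rw [intervalIntegral.integral_neg, intervalIntegral.integral_const_mul]
    have : H * ∫ s in t₁..t₂, φ s ≤ 1 := by
      calc H * ∫ s in t₁..t₂, φ s ≤ H * (1 / (3 * K)) := by
            apply mul_le_mul_of_nonneg_left hintle hH0
        _ = H / (3 * (H + 1)) := by rw [hKdef]; ring
        _ ≤ 1 := by rw [div_le_one (by linarith)]; linarith
    linarith [hmono, hcalc ▸ (neg_le_neg this)]
  · -- the main inequality
    intro t ht
    have hane' := hane t ht
    have key : (c + h t) / a t * a t = c + h t := div_mul_cancel₀ _ hane'
    have : (-((1 - φ t) * ((c + h t) / a t))) * a t + h t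
        = -((1 - φ t) * c - φ t * h t) := by
      field_simp
      ring
    rw [this]
end

section
/- Let t₀ ≥ 0, let γ ≥ 1 be an integer, let g ∈ C¹([t₀,∞);ℝ) with g(t) > 0 for all t, let d̄ ∈ C⁰([t₀,∞);ℝ), and let ψ : [t₀,∞) → (0,∞) be continuous. Then there exist τ ∈ (0, 1/2], ζ ∈ C¹([t₀,∞);ℝ) with ζ(t) ≥ 0 for all t and ζ(t₀) = 0, and d ∈ C⁰([t₀,∞);ℝ) with d(t) ≤ d̄(t) − 1/4 for all t ≥ t₀, d(t) = d̄(t) − 1/4 for all t ≥ t₀ + τ, and d(t) ≥ −1/(4τ) for all t ∈ [t₀, t₀ + τ], such that −ζ(t)·s^γ + s ≤ (d̄(t) − d(t))·g(t) for all t ≥ t₀ and all s ∈ [0, ψ(t)]. -/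
set_option maxHeartbeats 1600000 in
/-- Let `t₀ ≥ 0`, `γ ≥ 1` an integer, `g ∈ C¹([t₀,∞);ℝ)` positive,
`d̄ ∈ C⁰([t₀,∞);ℝ)`, and `ψ : [t₀,∞) → (0,∞)` continuous. Then there exist `τ ∈ (0, 1/2]`,
`ζ ∈ C¹([t₀,∞);ℝ)` with `ζ ≥ 0` and `ζ(t₀) = 0`, and `d ∈ C⁰([t₀,∞);ℝ)` with
`d(t) ≤ d̄(t) − 1/4` for all `t ≥ t₀`, `d(t) = d̄(t) − 1/4` for `t ≥ t₀ + τ`, and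
`d(t) ≥ −1/(4τ)` on `[t₀, t₀+τ]`, such that `−ζ(t)·s^γ + s ≤ (d̄(t) − d(t))·g(t)` for all
`t ≥ t₀` and all `s ∈ [0, ψ(t)]`. -/
theorem stmt18 (t₀ : ℝ) (ht₀ : 0 ≤ t₀) (γ : ℕ) (hγ : 1 ≤ γ)
    (g g' : ℝ → ℝ)
    (hg'c : ContinuousOn g' (Set.Ici t₀))
    (hgd : ∀ t, t₀ ≤ t → HasDerivWithinAt g (g' t) (Set.Ici t₀) t)
    (hgpos : ∀ t, t₀ ≤ t → 0 < g t)
    (dbar : ℝ → ℝ) (hdbarc : ContinuousOn dbar (Set.Ici t₀))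
    (ψ : ℝ → ℝ) (hψc : ContinuousOn ψ (Set.Ici t₀)) (hψpos : ∀ t, t₀ ≤ t → 0 < ψ t) :
    ∃ τ : ℝ, 0 < τ ∧ τ ≤ 1 / 2 ∧
      ∃ ζ ζ' d : ℝ → ℝ,
        ContinuousOn ζ' (Set.Ici t₀) ∧
        (∀ t, t₀ ≤ t → HasDerivWithinAt ζ (ζ' t) (Set.Ici t₀) t) ∧
        (∀ t, t₀ ≤ t → 0 ≤ ζ t) ∧ ζ t₀ = 0 ∧
        ContinuousOn d (Set.Ici t₀) ∧
        (∀ t, t₀ ≤ t → d t ≤ dbar t - 1 / 4) ∧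
        (∀ t, t₀ + τ ≤ t → d t = dbar t - 1 / 4) ∧
        (∀ t, t₀ ≤ t → t ≤ t₀ + τ → -(1 / (4 * τ)) ≤ d t) ∧
        (∀ t, t₀ ≤ t → ∀ s : ℝ, 0 ≤ s → s ≤ ψ t →
          -(ζ t) * s ^ γ + s ≤ (dbar t - d t) * g t) := by
  have hgc : ContinuousOn g (Set.Ici t₀) := fun t ht => (hgd t ht).continuousWithinAt
  have hgne : ∀ t ∈ Set.Ici t₀, g t ≠ 0 := fun t ht => (hgpos t ht).ne'
  set K : Set ℝ := Set.Icc t₀ (t₀ + 1/2) with hK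
  have hKsub : K ⊆ Set.Ici t₀ := fun t ht => ht.1
  have hKne : K.Nonempty := ⟨t₀, le_refl _, by linarith⟩
  have hKc : IsCompact K := isCompact_Icc
  -- upper bound C for ψ/g on K
  have hψg : ContinuousOn (fun t => ψ t / g t) K :=
    (hψc.mono hKsub).div (hgc.mono hKsub) (fun t ht => hgne t (hKsub ht))
  obtain ⟨t1, -, hC0⟩ := hKc.exists_isMaxOn hKne hψg
  set C : ℝ := max (ψ t1 / g t1) 0 with hCdef
  have hCnn : 0 ≤ C := le_max_right _ _
  have hCbound : ∀ t ∈ K, ψ t ≤ C * g t := by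
    intro t ht
    have h1 : ψ t / g t ≤ C := le_trans (hC0 ht) (le_max_left _ _)
    have hg : 0 < g t := hgpos t (hKsub ht)
    calc ψ t = (ψ t / g t) * g t := by field_simp
    _ ≤ C * g t := by nlinarith
  -- lower bound B for dbar on K
  obtain ⟨t2, -, hB0⟩ := hKc.exists_isMinOn hKne (hdbarc.mono hKsub)
  set B : ℝ := dbar t2 with hBdef
  -- choice of τ
  set E : ℝ := max 1 (C + 1/4 - B) with hEdef
  have hE1 : (1:ℝ) ≤ E := le_max_left _ _
  have hEpos : (0:ℝ) < E := by linarith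
  set τ : ℝ := 1 / (4 * E) with hτdef
  have hτpos : 0 < τ := by positivity
  have hτhalf : τ ≤ 1 / 2 := by
    rw [hτdef, div_le_div_iff₀ (by linarith) (by norm_num)]
    linarith
  have hτE : 1 / (4 * τ) = E := by
    rw [hτdef]; field_simp
  refine ⟨τ, hτpos, hτhalf, ?_⟩
  -- auxiliary ramp
  set r : ℝ → ℝ := fun t => max 0 ((t₀ + τ - t) / τ) with hrdef
  have hrnn : ∀ t, 0 ≤ r t := fun t => le_max_left _ _
  have hrle1 : ∀ t, t₀ ≤ t → r t ≤ 1 := by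
    intro t ht
    refine max_le (by norm_num) ?_
    rw [div_le_one hτpos]; linarith
  set d : ℝ → ℝ := fun t => dbar t - 1/4 - C * r t with hddef
  set ζ : ℝ → ℝ := fun t => ((t - t₀) / τ) * (4 / g t) ^ (γ - 1) with hζdef
  set ζ' : ℝ → ℝ := fun t => 1/τ * (4 / g t) ^ (γ - 1) +
      ((t - t₀) / τ) * (((γ - 1 : ℕ) : ℝ) * (4 / g t) ^ (γ - 1 - 1) *
        ((0 * g t - 4 * g' t) / g t ^ 2)) with hζ'def
  have h4g : ContinuousOn (fun t => 4 / g t) (Set.Ici t₀) :=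
    continuousOn_const.div hgc hgne
  refine ⟨ζ, ζ', d, ?_, ?_, ?_, ?_, ?_, ?_, ?_, ?_, ?_⟩
  · -- continuity of ζ'
    apply ContinuousOn.add
    · exact continuousOn_const.mul (h4g.pow _)
    · refine (((continuousOn_id.sub continuousOn_const).div_const τ).mul ?_)
      refine (continuousOn_const.mul (h4g.pow _)).mul ?_
      exact ((continuousOn_const.mul hgc).sub (continuousOn_const.mul hg'c)).div
        (hgc.pow 2) (fun t ht => pow_ne_zero 2 (hgne t ht))
  · -- ζ has derivative ζ'
    intro t ht
    have h1 : HasDerivWithinAt (fun t => (t - t₀) / τ) (1 / τ) (Set.Ici t₀) t := by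
      simpa using (((hasDerivWithinAt_id t (Set.Ici t₀)).sub_const t₀).div_const τ)
    have h2 : HasDerivWithinAt (fun t => 4 / g t)
        ((0 * g t - 4 * g' t) / g t ^ 2) (Set.Ici t₀) t :=
      (hasDerivWithinAt_const t _ 4).div (hgd t ht) (hgne t ht)
    have h3 := h2.pow (γ - 1)
    have := h1.mul h3
    simpa [hζdef, hζ'def, mul_comm, mul_assoc, mul_left_comm, Pi.mul_def, Pi.pow_def] using this
  · -- ζ ≥ 0
    intro t ht
    have h0 : (0:ℝ) ≤ (t - t₀) / τ := div_nonneg (by linarith) hτpos.le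
    have h4 : (0:ℝ) ≤ 4 / g t := (div_pos four_pos (hgpos t ht)).le
    exact mul_nonneg h0 (pow_nonneg h4 _)
  · simp [hζdef]
  · -- continuity of d
    refine (hdbarc.sub continuousOn_const).sub (continuousOn_const.mul ?_)
    exact (continuous_const.max
      ((continuous_const.sub continuous_id).div_const τ)).continuousOn
  · intro t ht
    have := mul_nonneg hCnn (hrnn t)
    simp only [hddef]; linarith
  · intro t ht
    have hr0 : r t = 0 := by
      refine max_eq_left ?_
      apply div_nonpos_of_nonpos_of_nonneg (by linarith) hτpos.le
    simp [hddef, hr0]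
  · intro t ht ht'
    rw [hτE]
    have htK : t ∈ K := ⟨ht, by linarith⟩
    have hB : B ≤ dbar t := hB0 htK
    have hr1 : r t ≤ 1 := hrle1 t ht
    have hE2 : C + 1/4 - B ≤ E := le_max_right _ _
    have := mul_nonneg hCnn (hrnn t)
    have hCr : C * r t ≤ C := by nlinarith
    simp only [hddef]; linarith
  · -- the main inequality
    intro t ht s hs0 hsψ
    have hgt : 0 < g t := hgpos t ht
    have hrhs : (dbar t - d t) * g t = (1/4 + C * r t) * g t := by
      simp only [hddef]; ring
    rw [hrhs]
    have hζnn : 0 ≤ ζ t := by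
      have h0 : (0:ℝ) ≤ (t - t₀) / τ := div_nonneg (by linarith) hτpos.le
      exact mul_nonneg h0 (pow_nonneg (div_pos four_pos hgt).le _)
    have hCrnn : 0 ≤ C * r t := mul_nonneg hCnn (hrnn t)
    by_cases hcase : s ≤ g t / 4
    · have h1 : 0 ≤ ζ t * s ^ γ := mul_nonneg hζnn (pow_nonneg hs0 γ)
      nlinarith [mul_nonneg hCrnn hgt.le]
    · push_neg at hcase
      set x : ℝ := (t - t₀) / τ with hxdef
      have hxnn : 0 ≤ x := div_nonneg (by linarith) hτpos.le
      have hkey : x * s ≤ ζ t * s ^ γ := by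
        have hs : s ^ γ = s ^ (γ - 1) * s := by
          conv_lhs => rw [show γ = (γ - 1) + 1 by omega]
          rw [pow_succ]
        have h41 : (1:ℝ) ≤ 4 / g t * s := by
          rw [div_mul_eq_mul_div, le_div_iff₀ hgt]; linarith
        have hp : (1:ℝ) ≤ (4 / g t * s) ^ (γ - 1) := one_le_pow₀ h41
        have : ζ t * s ^ γ = x * ((4 / g t * s) ^ (γ - 1) * s) := by
          rw [hζdef]; simp only [mul_pow, hs]; ring
        rw [this]
        exact mul_le_mul_of_nonneg_left (le_mul_of_one_le_left hs0 hp) hxnn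
      have e1 : (1 - x) * s = s - x * s := by ring
      have h1 : -(ζ t) * s ^ γ + s ≤ (1 - x) * s := by
        have e2 : -(ζ t) * s ^ γ + s = s - ζ t * s ^ γ := by ring
        rw [e1, e2]; linarith [hkey]
      by_cases hx1 : 1 ≤ x
      · have h2 : (1 - x) * s ≤ 0 := mul_nonpos_of_nonpos_of_nonneg (by linarith) hs0
        have h3 : 0 ≤ (1/4 + C * r t) * g t := mul_nonneg (by linarith) hgt.le
        linarith
      · push_neg at hx1
        have htτ : t < t₀ + τ := by
          have : t - t₀ < τ := by
            have := (div_lt_one hτpos).mp hx1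
            linarith
          linarith
        have htK : t ∈ K := ⟨ht, by linarith⟩
        have hψC : ψ t ≤ C * g t := hCbound t htK
        have h1x : 0 < 1 - x := by linarith
        have e : (t₀ + τ - t) / τ = 1 - x := by
          rw [hxdef, eq_sub_iff_add_eq, ← add_div,
            div_eq_one_iff_eq hτpos.ne']
          ring
        have hr : r t = 1 - x := by
          simp only [hrdef]
          rw [e]
          exact max_eq_right h1x.le
        have h2 : (1 - x) * s ≤ (1 - x) * ψ t := mul_le_mul_of_nonneg_left hsψ h1x.le
        have h3 : (1 - x) * ψ t ≤ (1 - x) * (C * g t) := mul_le_mul_of_nonneg_left hψC h1x.le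
        rw [hr]
        have e3 : (1/4 + C * (1 - x)) * g t = (1 - x) * (C * g t) + g t / 4 := by ring
        rw [e3]
        linarith
end
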